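/- arXiv:hep-th/0205230 — 7 statements merged into one kernel-verified Lean document; each statement's English description precedes it below -/
import Mathlib

section
/- Let V be a real vector space of dimension 4r (r ≥ 1) with a quaternionic triple J^1, J^2, J^3, and let R be a curvature-type tensor on V such that every value of R commutes with the complex structures, i.e. R(x,y) ∘ J^α = J^α ∘ R(x,y) for all x, y ∈ V and all α. Then the Sp(1)-triplet part of R in its first two arguments vanishes: Σ_α R(J^α x, J^α y) = 3 · R(x,y) for all x, y ∈ V. (This is the invariant content of the statement that such an R is determined by a tensor W_{CDB}{}^A that is symmetric in its lower Gl(r,ℍ)-indices.) -/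
noncomputable section

/-- The Levi-Civita symbol on `Fin 3`, with `ε 0 1 2 = 1`. -/
def epsLC (a b c : Fin 3) : ℝ :=
  if (a, b, c) = ((0 : Fin 3), (1 : Fin 3), (2 : Fin 3)) ∨ (a, b, c) = (1, 2, 0) ∨ (a, b, c) = (2, 0, 1) then 1
  else if (a, b, c) = (2, 1, 0) ∨ (a, b, c) = (0, 2, 1) ∨ (a, b, c) = (1, 0, 2) then -1
  else 0

/-- A quaternionic triple on a real vector space: three endomorphisms satisfying the
quaternion algebra `J^α ∘ J^β = -δ^{αβ} id + Σ_γ ε^{αβγ} J^γ`. -/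
def QuatTriple {V : Type*} [AddCommGroup V] [Module ℝ V] (J : Fin 3 → V →ₗ[ℝ] V) : Prop :=
  ∀ α β, (J α) ∘ₗ (J β) =
    (if α = β then (-1 : ℝ) else 0) • (LinearMap.id : V →ₗ[ℝ] V) + ∑ γ, epsLC α β γ • J γ

/-- for a curvature-type tensor (bilinear, antisymmetric, first Bianchi
identity) on a `4r`-dimensional quaternionic vector space whose values commute with the
complex structures, the Sp(1)-triplet part vanishes: `Σ_α R(J^α x, J^α y) = 3 R(x,y)`. -/
theorem stmt_2 (r : ℕ) (hr : 1 ≤ r) (V : Type*) [AddCommGroup V] [Module ℝ V]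
    [FiniteDimensional ℝ V] (hdim : Module.finrank ℝ V = 4 * r)
    (J : Fin 3 → V →ₗ[ℝ] V) (hJ : QuatTriple J)
    (R : V →ₗ[ℝ] V →ₗ[ℝ] (V →ₗ[ℝ] V))
    (hanti : ∀ x y, R x y = - R y x)
    (hbianchi : ∀ x y z, R x y z + R z x y + R y z x = 0)
    (hcomm : ∀ x y α, (R x y) ∘ₗ (J α) = (J α) ∘ₗ (R x y)) :
    ∀ x y, ∑ α, R (J α x) (J α y) = (3 : ℝ) • R x y := by
  have hcP : ∀ (α : Fin 3) (u v w : V), R u v (J α w) = J α (R u v w) := by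
    intro α u v w
    have h := congrFun (congrArg DFunLike.coe (hcomm u v α)) w
    simpa using h
  have haP : ∀ u v w : V, R u v w = -(R v u w) := by
    intro u v w
    rw [hanti u v]
    simp
  have hJ00 : ∀ w : V, J 0 (J 0 w) = -w := by
    intro w
    have h := congrFun (congrArg DFunLike.coe (hJ 0 0)) w
    simpa [epsLC, Fin.sum_univ_three] using h
  have hJ01 : ∀ w : V, J 0 (J 1 w) = J 2 w := by
    intro w
    have h := congrFun (congrArg DFunLike.coe (hJ 0 1)) w
    simpa [epsLC, Fin.sum_univ_three] using h
  have hJ02 : ∀ w : V, J 0 (J 2 w) = -(J 1 w) := by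
    intro w
    have h := congrFun (congrArg DFunLike.coe (hJ 0 2)) w
    simpa [epsLC, Fin.sum_univ_three] using h
  have hJ10 : ∀ w : V, J 1 (J 0 w) = -(J 2 w) := by
    intro w
    have h := congrFun (congrArg DFunLike.coe (hJ 1 0)) w
    simpa [epsLC, Fin.sum_univ_three] using h
  have hJ11 : ∀ w : V, J 1 (J 1 w) = -w := by
    intro w
    have h := congrFun (congrArg DFunLike.coe (hJ 1 1)) w
    simpa [epsLC, Fin.sum_univ_three] using h
  have hJ12 : ∀ w : V, J 1 (J 2 w) = J 0 w := by
    intro w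
    have h := congrFun (congrArg DFunLike.coe (hJ 1 2)) w
    simpa [epsLC, Fin.sum_univ_three] using h
  have hJ20 : ∀ w : V, J 2 (J 0 w) = J 1 w := by
    intro w
    have h := congrFun (congrArg DFunLike.coe (hJ 2 0)) w
    simpa [epsLC, Fin.sum_univ_three] using h
  have hJ21 : ∀ w : V, J 2 (J 1 w) = -(J 0 w) := by
    intro w
    have h := congrFun (congrArg DFunLike.coe (hJ 2 1)) w
    simpa [epsLC, Fin.sum_univ_three] using h
  have hJ22 : ∀ w : V, J 2 (J 2 w) = -w := by
    intro w
    have h := congrFun (congrArg DFunLike.coe (hJ 2 2)) w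
    simpa [epsLC, Fin.sum_univ_three] using h
  intro x y
  apply LinearMap.ext
  intro z
  simp only [LinearMap.sum_apply, LinearMap.add_apply, LinearMap.smul_apply, Fin.sum_univ_three]
  have e0 := hbianchi x y z
  rw [haP z x y] at e0
  have e1 := hbianchi x y (J 0 z)
  simp only [hcP] at e1
  rw [haP (J 0 z) x y] at e1
  have f1 := congrArg (⇑(J 0)) e1
  simp only [map_add, map_neg, map_zero, hJ00, hJ01, hJ02, hJ10, hJ11, hJ12, hJ20, hJ21, hJ22] at f1
  have e2 := hbianchi x y (J 1 z)
  simp only [hcP] at e2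
  rw [haP (J 1 z) x y] at e2
  have f2 := congrArg (⇑(J 1)) e2
  simp only [map_add, map_neg, map_zero, hJ00, hJ01, hJ02, hJ10, hJ11, hJ12, hJ20, hJ21, hJ22] at f2
  have e3 := hbianchi x y (J 2 z)
  simp only [hcP] at e3
  rw [haP (J 2 z) x y] at e3
  have f3 := congrArg (⇑(J 2)) e3
  simp only [map_add, map_neg, map_zero, hJ00, hJ01, hJ02, hJ10, hJ11, hJ12, hJ20, hJ21, hJ22] at f3
  have e4 := hbianchi x (J 0 y) (J 0 z)
  simp only [hcP] at e4
  rw [haP (J 0 z) x y] at e4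
  simp only [map_neg] at e4
  have e5 := hbianchi x (J 0 y) (J 1 z)
  simp only [hcP] at e5
  rw [haP (J 1 z) x y] at e5
  simp only [map_neg] at e5
  have f5 := congrArg (⇑(J 2)) e5
  simp only [map_add, map_neg, map_zero, hJ00, hJ01, hJ02, hJ10, hJ11, hJ12, hJ20, hJ21, hJ22] at f5
  have e6 := hbianchi x (J 1 y) (J 0 z)
  simp only [hcP] at e6
  rw [haP (J 0 z) x y] at e6
  simp only [map_neg] at e6
  have f6 := congrArg (⇑(J 2)) e6
  simp only [map_add, map_neg, map_zero, hJ00, hJ01, hJ02, hJ10, hJ11, hJ12, hJ20, hJ21, hJ22] at f6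
  have e7 := hbianchi x (J 1 y) (J 1 z)
  simp only [hcP] at e7
  rw [haP (J 1 z) x y] at e7
  simp only [map_neg] at e7
  have e8 := hbianchi x (J 2 y) z
  simp only [hcP] at e8
  rw [haP z x y] at e8
  simp only [map_neg] at e8
  have f8 := congrArg (⇑(J 2)) e8
  simp only [map_add, map_neg, map_zero, hJ00, hJ01, hJ02, hJ10, hJ11, hJ12, hJ20, hJ21, hJ22] at f8
  have e9 := hbianchi x (J 2 y) (J 0 z)
  simp only [hcP] at e9
  rw [haP (J 0 z) x y] at e9
  simp only [map_neg] at e9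
  have f9 := congrArg (⇑(J 1)) e9
  simp only [map_add, map_neg, map_zero, hJ00, hJ01, hJ02, hJ10, hJ11, hJ12, hJ20, hJ21, hJ22] at f9
  have e10 := hbianchi x (J 2 y) (J 2 z)
  simp only [hcP] at e10
  rw [haP (J 2 z) x y] at e10
  simp only [map_neg] at e10
  have e11 := hbianchi (J 0 x) y (J 0 z)
  simp only [hcP] at e11
  rw [haP (J 0 z) (J 0 x) y] at e11
  have e12 := hbianchi (J 0 x) y (J 1 z)
  simp only [hcP] at e12
  rw [haP (J 1 z) (J 0 x) y] at e12
  have f12 := congrArg (⇑(J 2)) e12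
  simp only [map_add, map_neg, map_zero, hJ00, hJ01, hJ02, hJ10, hJ11, hJ12, hJ20, hJ21, hJ22] at f12
  have e13 := hbianchi (J 0 x) (J 0 y) z
  simp only [hcP] at e13
  rw [haP z (J 0 x) y] at e13
  simp only [map_neg] at e13
  have e14 := hbianchi (J 0 x) (J 0 y) (J 0 z)
  simp only [hcP] at e14
  rw [haP (J 0 z) (J 0 x) y] at e14
  simp only [map_neg] at e14
  have f14 := congrArg (⇑(J 0)) e14
  simp only [map_add, map_neg, map_zero, hJ00, hJ01, hJ02, hJ10, hJ11, hJ12, hJ20, hJ21, hJ22] at f14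
  have e15 := hbianchi (J 0 x) (J 0 y) (J 1 z)
  simp only [hcP] at e15
  rw [haP (J 1 z) (J 0 x) y] at e15
  simp only [map_neg] at e15
  have f15 := congrArg (⇑(J 1)) e15
  simp only [map_add, map_neg, map_zero, hJ00, hJ01, hJ02, hJ10, hJ11, hJ12, hJ20, hJ21, hJ22] at f15
  have e16 := hbianchi (J 0 x) (J 0 y) (J 2 z)
  simp only [hcP] at e16
  rw [haP (J 2 z) (J 0 x) y] at e16
  simp only [map_neg] at e16
  have f16 := congrArg (⇑(J 2)) e16
  simp only [map_add, map_neg, map_zero, hJ00, hJ01, hJ02, hJ10, hJ11, hJ12, hJ20, hJ21, hJ22] at f16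
  have e17 := hbianchi (J 0 x) (J 1 y) z
  simp only [hcP] at e17
  rw [haP z (J 0 x) y] at e17
  simp only [map_neg] at e17
  have f17 := congrArg (⇑(J 2)) e17
  simp only [map_add, map_neg, map_zero, hJ00, hJ01, hJ02, hJ10, hJ11, hJ12, hJ20, hJ21, hJ22] at f17
  have e18 := hbianchi (J 0 x) (J 1 y) (J 0 z)
  simp only [hcP] at e18
  rw [haP (J 0 z) (J 0 x) y] at e18
  simp only [map_neg] at e18
  have f18 := congrArg (⇑(J 1)) e18
  simp only [map_add, map_neg, map_zero, hJ00, hJ01, hJ02, hJ10, hJ11, hJ12, hJ20, hJ21, hJ22] at f18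
  have e19 := hbianchi (J 0 x) (J 1 y) (J 1 z)
  simp only [hcP] at e19
  rw [haP (J 1 z) (J 0 x) y] at e19
  simp only [map_neg] at e19
  have f19 := congrArg (⇑(J 0)) e19
  simp only [map_add, map_neg, map_zero, hJ00, hJ01, hJ02, hJ10, hJ11, hJ12, hJ20, hJ21, hJ22] at f19
  have e20 := hbianchi (J 0 x) (J 2 y) (J 0 z)
  simp only [hcP] at e20
  rw [haP (J 0 z) (J 0 x) y] at e20
  simp only [map_neg] at e20
  have f20 := congrArg (⇑(J 2)) e20
  simp only [map_add, map_neg, map_zero, hJ00, hJ01, hJ02, hJ10, hJ11, hJ12, hJ20, hJ21, hJ22] at f20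
  have e21 := hbianchi (J 0 x) (J 2 y) (J 2 z)
  simp only [hcP] at e21
  rw [haP (J 2 z) (J 0 x) y] at e21
  simp only [map_neg] at e21
  have f21 := congrArg (⇑(J 0)) e21
  simp only [map_add, map_neg, map_zero, hJ00, hJ01, hJ02, hJ10, hJ11, hJ12, hJ20, hJ21, hJ22] at f21
  have e22 := hbianchi (J 1 x) y z
  simp only [hcP] at e22
  rw [haP z (J 1 x) y] at e22
  have f22 := congrArg (⇑(J 1)) e22
  simp only [map_add, map_neg, map_zero, hJ00, hJ01, hJ02, hJ10, hJ11, hJ12, hJ20, hJ21, hJ22] at f22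
  have e23 := hbianchi (J 1 x) y (J 1 z)
  simp only [hcP] at e23
  rw [haP (J 1 z) (J 1 x) y] at e23
  have e24 := hbianchi (J 1 x) y (J 2 z)
  simp only [hcP] at e24
  rw [haP (J 2 z) (J 1 x) y] at e24
  have f24 := congrArg (⇑(J 0)) e24
  simp only [map_add, map_neg, map_zero, hJ00, hJ01, hJ02, hJ10, hJ11, hJ12, hJ20, hJ21, hJ22] at f24
  have e25 := hbianchi (J 1 x) (J 0 y) z
  simp only [hcP] at e25
  rw [haP z (J 1 x) y] at e25
  simp only [map_neg] at e25
  have f25 := congrArg (⇑(J 2)) e25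
  simp only [map_add, map_neg, map_zero, hJ00, hJ01, hJ02, hJ10, hJ11, hJ12, hJ20, hJ21, hJ22] at f25
  have e26 := hbianchi (J 1 x) (J 0 y) (J 1 z)
  simp only [hcP] at e26
  rw [haP (J 1 z) (J 1 x) y] at e26
  simp only [map_neg] at e26
  have f26 := congrArg (⇑(J 0)) e26
  simp only [map_add, map_neg, map_zero, hJ00, hJ01, hJ02, hJ10, hJ11, hJ12, hJ20, hJ21, hJ22] at f26
  have e27 := hbianchi (J 1 x) (J 0 y) (J 2 z)
  simp only [hcP] at e27
  rw [haP (J 2 z) (J 1 x) y] at e27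
  simp only [map_neg] at e27
  have e28 := hbianchi (J 1 x) (J 1 y) z
  simp only [hcP] at e28
  rw [haP z (J 1 x) y] at e28
  simp only [map_neg] at e28
  have e29 := hbianchi (J 2 x) y z
  simp only [hcP] at e29
  rw [haP z (J 2 x) y] at e29
  have f29 := congrArg (⇑(J 2)) e29
  simp only [map_add, map_neg, map_zero, hJ00, hJ01, hJ02, hJ10, hJ11, hJ12, hJ20, hJ21, hJ22] at f29
  have e30 := hbianchi (J 2 x) y (J 1 z)
  simp only [hcP] at e30
  rw [haP (J 1 z) (J 2 x) y] at e30
  have f30 := congrArg (⇑(J 0)) e30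
  simp only [map_add, map_neg, map_zero, hJ00, hJ01, hJ02, hJ10, hJ11, hJ12, hJ20, hJ21, hJ22] at f30
  have e31 := hbianchi (J 2 x) (J 0 y) z
  simp only [hcP] at e31
  rw [haP z (J 2 x) y] at e31
  simp only [map_neg] at e31
  have f31 := congrArg (⇑(J 1)) e31
  simp only [map_add, map_neg, map_zero, hJ00, hJ01, hJ02, hJ10, hJ11, hJ12, hJ20, hJ21, hJ22] at f31
  have e32 := hbianchi (J 2 x) (J 0 y) (J 1 z)
  simp only [hcP] at e32
  rw [haP (J 1 z) (J 2 x) y] at e32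
  simp only [map_neg] at e32
  have e33 := hbianchi (J 2 x) (J 2 y) z
  simp only [hcP] at e33
  rw [haP z (J 2 x) y] at e33
  simp only [map_neg] at e33
  linear_combination (norm := module) (-1 : ℝ) • e0 + ((3 : ℝ)/2) • f1 + (1 : ℝ) • f2 + ((-1 : ℝ)/2) • f3 + ((-3 : ℝ)/2) • e4 + ((-3 : ℝ)/2) • f5 + ((-1 : ℝ)/2) • f6 + ((1 : ℝ)/2) • e7 + (-1 : ℝ) • f8 + ((-1 : ℝ)/2) • f9 + ((1 : ℝ)/2) • e10 + ((-3 : ℝ)/2) • e11 + ((-3 : ℝ)/2) • f12 + (-1 : ℝ) • e13 + ((-3 : ℝ)/2) • f14 + (-1 : ℝ) • f15 + ((1 : ℝ)/2) • f16 + (-1 : ℝ) • f17 + ((-1 : ℝ)/2) • f18 + ((1 : ℝ)/2) • f19 + ((1 : ℝ)/2) • f20 + ((1 : ℝ)/2) • f21 + ((-1 : ℝ)/2) • f22 + (1 : ℝ) • e23 + ((1 : ℝ)/2) • f24 + ((-1 : ℝ)/2) • f25 + (1 : ℝ) • f26 + ((-1 : ℝ)/2) • e27 + (1 : ℝ) •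 e28 + ((-1 : ℝ)/2) • f29 + ((1 : ℝ)/2) • f30 + ((1 : ℝ)/2) • f31 + ((-1 : ℝ)/2) • e32 + (1 : ℝ) • e33
end
end

section
/- Let V be a real vector space of dimension 4r (r ≥ 1) with a quaternionic triple J^1, J^2, J^3, and let R be a curvature-type tensor on V whose values commute with the complex structures, i.e. R(x,y) ∘ J^α = J^α ∘ R(x,y) for all x, y ∈ V and all α. Then the Ricci contraction of R is antisymmetric: Ric(x,y) = −Ric(y,x) for all x, y ∈ V. (In particular, hypercomplex manifolds need not be Ricci-flat, but their Ricci tensor is a two-form.) -/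
noncomputable section

/-- The Ricci contraction of a curvature-type tensor: `Ric(x,y) = tr (z ↦ R(z,x)y)`. -/
def ricci {V : Type*} [AddCommGroup V] [Module ℝ V]
    (R : V →ₗ[ℝ] V →ₗ[ℝ] (V →ₗ[ℝ] V)) (x y : V) : ℝ :=
  LinearMap.trace ℝ V ((R.flip x).flip y)

/-- for a curvature-type tensor on a `4r`-dimensional quaternionic vector
space whose values commute with the complex structures, the Ricci contraction is
antisymmetric. -/
theorem stmt_3 (r : ℕ) (hr : 1 ≤ r) (V : Type*) [AddCommGroup V] [Module ℝ V]
    [FiniteDimensional ℝ V] (hdim : Module.finrank ℝ V = 4 * r)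
    (J : Fin 3 → V →ₗ[ℝ] V) (hJ : QuatTriple J)
    (R : V →ₗ[ℝ] V →ₗ[ℝ] (V →ₗ[ℝ] V))
    (hanti : ∀ x y, R x y = - R y x)
    (hbianchi : ∀ x y z, R x y z + R z x y + R y z x = 0)
    (hcomm : ∀ x y α, (R x y) ∘ₗ (J α) = (J α) ∘ₗ (R x y)) :
    ∀ x y, ricci R x y = - ricci R y x := by
  -- Quaternion multiplication table
  have h01 : J 0 ∘ₗ J 1 = J 2 := by
    have h := hJ 0 1; simp [Fin.sum_univ_three, epsLC] at h; exact h
  have h10 : J 1 ∘ₗ J 0 = -J 2 := by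
    have h := hJ 1 0; simp [Fin.sum_univ_three, epsLC] at h; exact h
  have h12 : J 1 ∘ₗ J 2 = J 0 := by
    have h := hJ 1 2; simp [Fin.sum_univ_three, epsLC] at h; exact h
  have h21 : J 2 ∘ₗ J 1 = -J 0 := by
    have h := hJ 2 1; simp [Fin.sum_univ_three, epsLC] at h; exact h
  have h20 : J 2 ∘ₗ J 0 = J 1 := by
    have h := hJ 2 0; simp [Fin.sum_univ_three, epsLC] at h; exact h
  have h02 : J 0 ∘ₗ J 2 = -J 1 := by
    have h := hJ 0 2; simp [Fin.sum_univ_three, epsLC] at h; exact h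
  have hsq : ∀ α : Fin 3, J α ∘ₗ J α = -LinearMap.id := by
    intro α
    fin_cases α
    · have h := hJ 0 0; simp [Fin.sum_univ_three, epsLC] at h; exact h
    · have h := hJ 1 1; simp [Fin.sum_univ_three, epsLC] at h; exact h
    · have h := hJ 2 2; simp [Fin.sum_univ_three, epsLC] at h; exact h
  -- trace of (commuting A) ∘ J c vanishes
  have key0 : ∀ (A : V →ₗ[ℝ] V), (∀ α, A ∘ₗ J α = J α ∘ₗ A) →
      ∀ (a b c : Fin 3), J a ∘ₗ J b = J c → J b ∘ₗ J a = -J c →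
      LinearMap.trace ℝ V (A ∘ₗ J c) = 0 := by
    intro A hA a b c hab hba
    have chain : LinearMap.trace ℝ V (A ∘ₗ J c) = - LinearMap.trace ℝ V (A ∘ₗ J c) := by
      calc LinearMap.trace ℝ V (A ∘ₗ J c)
          = LinearMap.trace ℝ V ((A ∘ₗ J a) ∘ₗ J b) := by rw [LinearMap.comp_assoc, hab]
        _ = LinearMap.trace ℝ V (J b ∘ₗ (A ∘ₗ J a)) := (LinearMap.trace_comp_comm' (A ∘ₗ J a) (J b)).symm
        _ = LinearMap.trace ℝ V ((J b ∘ₗ A) ∘ₗ J a) := by rw [LinearMap.comp_assoc]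
        _ = LinearMap.trace ℝ V ((A ∘ₗ J b) ∘ₗ J a) := by rw [hA b]
        _ = LinearMap.trace ℝ V (A ∘ₗ (J b ∘ₗ J a)) := by rw [LinearMap.comp_assoc]
        _ = LinearMap.trace ℝ V (A ∘ₗ (-J c)) := by rw [hba]
        _ = - LinearMap.trace ℝ V (A ∘ₗ J c) := by rw [LinearMap.comp_neg, map_neg]
    linarith
  have hTrJ : ∀ (x y : V) (c : Fin 3), LinearMap.trace ℝ V (R x y ∘ₗ J c) = 0 := by
    intro x y c
    fin_cases c
    · exact key0 (R x y) (hcomm x y) 1 2 0 h12 h21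
    · exact key0 (R x y) (hcomm x y) 2 0 1 h20 h02
    · exact key0 (R x y) (hcomm x y) 0 1 2 h01 h10
  -- Step A : Ric(x, Jα y) = Ric(y, Jα x)
  have hA : ∀ (α : Fin 3) (x y : V), ricci R x (J α y) = ricci R y (J α x) := by
    intro α x y
    have e1 : (R.flip x).flip (J α y) = J α ∘ₗ ((R.flip x).flip y) := by
      ext z
      have h := LinearMap.congr_fun (hcomm z x α) y
      simpa using h
    have e1' : (R.flip y).flip (J α x) = J α ∘ₗ ((R.flip y).flip x) := by
      ext z
      have h := LinearMap.congr_fun (hcomm z y α) x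
      simpa using h
    have e2 : ((R.flip x).flip y) ∘ₗ J α
        = -(R x y ∘ₗ J α) + ((R.flip y).flip x) ∘ₗ J α := by
      ext z
      have hb := hbianchi x y (J α z)
      have ha := LinearMap.congr_fun (hanti y (J α z)) x
      simp only [LinearMap.comp_apply, LinearMap.add_apply, LinearMap.neg_apply,
        LinearMap.flip_apply] at *
      linear_combination (norm := abel) hb - ha
    calc ricci R x (J α y)
        = LinearMap.trace ℝ V (J α ∘ₗ ((R.flip x).flip y)) := by rw [ricci, e1]
      _ = LinearMap.trace ℝ V (((R.flip x).flip y) ∘ₗ J α) :=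
          LinearMap.trace_comp_comm' _ _
      _ = LinearMap.trace ℝ V (-(R x y ∘ₗ J α) + ((R.flip y).flip x) ∘ₗ J α) := by rw [e2]
      _ = LinearMap.trace ℝ V (((R.flip y).flip x) ∘ₗ J α) := by
          rw [map_add, map_neg, hTrJ x y α]; ring
      _ = LinearMap.trace ℝ V (J α ∘ₗ ((R.flip y).flip x)) :=
          LinearMap.trace_comp_comm' _ _
      _ = ricci R y (J α x) := by rw [ricci, e1']
  -- ricci is additive/neg in second slot
  have hneg : ∀ x y : V, ricci R x (-y) = - ricci R x y := by
    intro x y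
    rw [ricci, ricci, map_neg, map_neg]
  -- Step C : Ric(Jα a, Jα b) = -Ric(b, a)
  have hC : ∀ (α : Fin 3) (a b : V), ricci R (J α a) (J α b) = - ricci R b a := by
    intro α a b
    have h := hA α (J α a) b
    have hsqa : J α (J α a) = -a := by
      have := LinearMap.congr_fun (hsq α) a
      simpa using this
    rw [hsqa, hneg] at h
    linarith [h]
  intro x y
  have hv2 : ∀ v : V, J 2 v = J 0 (J 1 v) := by
    intro v
    have := LinearMap.congr_fun h01 v
    simpa using this.symm
  have hway1 : ricci R (J 2 x) (J 2 y) = - ricci R y x := hC 2 x y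
  have hway2 : ricci R (J 2 x) (J 2 y) = ricci R x y := by
    rw [hv2 x, hv2 y, hC 0 (J 1 x) (J 1 y), hC 1 y x]
    ring
  linarith [hway1, hway2]
end
end

section
/- Let J^α (α = 1,2,3) be an arbitrary almost hypercomplex structure on an open set U ⊆ ℝ^{4r}, with diagonal Nijenhuis tensor N_{XY}^Z and Obata connection Γ^{Ob}_{XY}^Z. Then the torsionful connection Γ_{XY}^Z := Γ^{Ob}_{XY}^Z + N_{XY}^Z makes the complex structures covariantly constant: identically on U and for every α, ∂_X J^α_Y^Z − (Γ^{Ob} + N)_{XY}^W J^α_W^Z + (Γ^{Ob} + N)_{XW}^Z J^α_Y^W = 0. In other words, any almost hypercomplex structure admits a torsionful connection (Obata plus Nijenhuis torsion) with respect to which the three complex structures are covariantly constant. -/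
noncomputable section

/-- Partial derivative `∂_i f` of a scalar function on `ℝ^n`. -/
def pd {n : ℕ} (i : Fin n) (f : (Fin n → ℝ) → ℝ) (x : Fin n → ℝ) : ℝ :=
  fderiv ℝ f x (Pi.single i 1)

/-- The diagonal Nijenhuis tensor `N_{XY}^Z` of a triple of (1,1)-tensor fields. -/
def nijenhuis {n : ℕ} (J : Fin 3 → Fin n → Fin n → (Fin n → ℝ) → ℝ)
    (X Y Z : Fin n) (x : Fin n → ℝ) : ℝ :=
  (1 / 12) * ∑ α, ∑ W,
    (J α X W x * (pd W (J α Y Z) x - pd Y (J α W Z) x)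
      - J α Y W x * (pd W (J α X Z) x - pd X (J α W Z) x))

/-- The Obata connection `Γ^{Ob}_{XY}^Z` of a triple of (1,1)-tensor fields. -/
def obata {n : ℕ} (J : Fin 3 → Fin n → Fin n → (Fin n → ℝ) → ℝ)
    (X Y Z : Fin n) (x : Fin n → ℝ) : ℝ :=
  -(1 / 6) * ∑ α, ∑ W,
    ((pd X (J α Y W) x + pd Y (J α X W) x
        + (1 / 2) * ∑ β, ∑ γ, epsLC α β γ *
            ((∑ u, J β X u x * pd u (J γ Y W) x) + ∑ u, J β Y u x * pd u (J γ X W) x))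
      * J α W Z x)

/-- An almost hypercomplex structure on an open set `U ⊆ ℝ^n`: a smooth family of three
(1,1)-tensor fields forming at every point of `U` a quaternionic triple. -/
def IsAlmostHypercomplexOn {n : ℕ} (J : Fin 3 → Fin n → Fin n → (Fin n → ℝ) → ℝ)
    (U : Set (Fin n → ℝ)) : Prop :=
  (∀ α X Y, ContDiffOn ℝ (⊤ : ℕ∞) (J α X Y) U) ∧
  ∀ α β X Z, ∀ x ∈ U, ∑ W, J α X W x * J β W Z x =
    (if α = β then (-1 : ℝ) else 0) * (if X = Z then 1 else 0)
      + ∑ γ, epsLC α β γ * J γ X Z x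


/-!
Fix a point `x` and a direction `X`, and read `Γ_{X·}^·` as a matrix `Γ`; the claim is
`Γ K_α - K_α Γ = ∂_X K_α` for the matrices `K_α = J^α(x)`. Differentiating the quaternion relations
shows that every directional derivative `a_α` of the triple satisfies
`K_α a_β + a_α K_β = ε^{αβγ} a_γ`, which makes it an infinitesimal conjugation `a_α = [S, K_α]`
with `S = -¼ ∑ a_β K_β`. Obata plus Nijenhuis splits into `S` for `a = ∂_X J`, a part built from
the derivatives `∂ J^α_X^·` and a part built from the derivatives along the vectors `J^β_X`;
the last two are sums of averages `L - ∑ K_α L K_α` over conjugation by the unit quaternions,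
so they commute with every `K_α`.
-/

section Quaternionic

variable {R : Type*} [Ring R] [Algebra ℝ R]

def IsQuaternionicTriple (K : Fin 3 → R) : Prop :=
  ∀ α β, K α * K β = (if α = β then -1 else 0) + ∑ γ, epsLC α β γ • K γ

def IsQuaternionicVariation (K a : Fin 3 → R) : Prop :=
  ∀ α β, K α * a β + a α * K β = ∑ γ, epsLC α β γ • a γ

theorem epsLC_self_left (α γ : Fin 3) : epsLC α α γ = 0 := by
  fin_cases α <;> fin_cases γ <;> simp [epsLC]

namespace IsQuaternionicTriple

variable {K : Fin 3 → R} (hK : IsQuaternionicTriple K)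
include hK

theorem mul_eq (α β : Fin 3) :
    K α * K β = (if α = β then -1 else 0) + ∑ γ, epsLC α β γ • K γ :=
  hK α β

theorem mul_mul_eq (α β : Fin 3) (y : R) :
    K α * (K β * y) = (if α = β then -y else 0) + ∑ γ, epsLC α β γ • (K γ * y) := by
  rw [← mul_assoc, hK α β, add_mul, Finset.sum_mul]
  split_ifs <;> simp

-- For `L = x * K γ` this element is `L - ∑ α, K α * L * K α`, the sum of the conjugates of `L`
-- by the unit quaternions `1, K 0, K 1, K 2`.
theorem commute_mul_add_mul_add_sum (x : R) (μ γ : Fin 3) :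
    Commute (K μ) (x * K γ + K γ * x + ∑ α, ∑ β, epsLC α β γ • (K β * x * K α)) := by
  unfold Commute SemiconjBy
  fin_cases μ <;> fin_cases γ <;>
    simp [Fin.sum_univ_three, mul_add, add_mul, mul_assoc, hK.mul_eq, hK.mul_mul_eq, epsLC] <;>
    module

end IsQuaternionicTriple

namespace IsQuaternionicVariation

variable {K a : Fin 3 → R} (ha : IsQuaternionicVariation K a)
include ha

theorem mul_eq (α β : Fin 3) : K α * a β = ∑ γ, epsLC α β γ • a γ - a α * K β :=
  eq_sub_of_add_eq (ha α β)

theorem mul_mul_eq (α β : Fin 3) (y : R) :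
    K α * (a β * y) = ∑ γ, epsLC α β γ • (a γ * y) - a α * (K β * y) := by
  rw [← mul_assoc, ha.mul_eq, sub_mul, Finset.sum_mul, mul_assoc]
  simp

theorem mul_self_eq_neg (α : Fin 3) : K α * a α = -(a α * K α) := by
  simp [ha.mul_eq, epsLC_self_left]

theorem sum_mul_commutator (hK : IsQuaternionicTriple K) (μ : Fin 3) :
    (∑ α, a α * K α) * K μ - K μ * ∑ α, a α * K α = -(4 : ℝ) • a μ := by
  fin_cases μ <;>
    simp [Fin.sum_univ_three, mul_add, add_mul, mul_assoc, hK.mul_eq, ha.mul_mul_eq, epsLC] <;>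
    module

-- With `a α = S * K α - K α * S` (see `sum_mul_commutator`) this element is
-- `-(L - ∑ α, K α * L * K α)` for `L = S * K δ`.
theorem commute_sub_sum (hK : IsQuaternionicTriple K) (μ δ : Fin 3) :
    Commute (K μ) (a δ - ∑ α, ∑ γ, epsLC α δ γ • (a γ * K α)) := by
  unfold Commute SemiconjBy
  fin_cases μ <;> fin_cases δ <;>
    simp [Fin.sum_univ_three, mul_add, add_mul, mul_sub, sub_mul, mul_assoc, hK.mul_eq, ha.mul_eq,
      ha.mul_mul_eq, epsLC] <;>
    module

theorem commutator_eq {b : Fin 3 → R} {e : Fin 3 → Fin 3 → R} (hK : IsQuaternionicTriple K)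
    (he : ∀ δ, IsQuaternionicVariation K (e δ)) {Γ : R}
    (hΓ : Γ = -(1 / 6 : ℝ) • ∑ α, (a α + b α
          + (1 / 2 : ℝ) • ∑ β, ∑ γ, epsLC α β γ • (e β γ + K β * b γ)) * K α
        + (1 / 12 : ℝ) • ∑ α, (e α α + b α * K α - K α * b α + K α * a α))
    (μ : Fin 3) : Γ * K μ - K μ * Γ = a μ := by
  set B := ∑ γ, (b γ * K γ + K γ * b γ + ∑ α, ∑ β, epsLC α β γ • (K β * b γ * K α))
  set E := ∑ δ, (e δ δ - ∑ α, ∑ γ, epsLC α δ γ • (e δ γ * K α))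
  replace hΓ : Γ = -(1 / 4 : ℝ) • ∑ α, a α * K α - (1 / 12 : ℝ) • B + (1 / 12 : ℝ) • E := by
    simp only [hΓ, B, E, ha.mul_self_eq_neg, Fin.sum_univ_three, add_mul, smul_add, smul_mul_assoc]
    module
  have hB : Commute (K μ) B :=
    Commute.sum_right _ _ _ fun γ _ ↦ hK.commute_mul_add_mul_add_sum (b γ) μ γ
  have hE : Commute (K μ) E := Commute.sum_right _ _ _ fun δ _ ↦ (he δ).commute_sub_sum hK μ δ
  rw [hΓ, add_mul, sub_mul, mul_add, mul_sub, smul_mul_assoc, smul_mul_assoc, smul_mul_assoc,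
    mul_smul_comm, mul_smul_comm, mul_smul_comm, hB.eq, hE.eq]
  calc _ = -(1 / 4 : ℝ) • ((∑ α, a α * K α) * K μ - K μ * ∑ α, a α * K α) := by module
    _ = a μ := by rw [ha.sum_mul_commutator hK μ]; module

end IsQuaternionicVariation

end Quaternionic

theorem sum_mul_pd_eq_fderiv {n : ℕ} (f : (Fin n → ℝ) → ℝ) (x v : Fin n → ℝ) :
    ∑ u, v u * pd u f x = fderiv ℝ f x v := by
  conv_rhs => rw [pi_eq_sum_univ' v]
  simp [pd]

section Matrices

variable {n : ℕ} (J : Fin 3 → Fin n → Fin n → (Fin n → ℝ) → ℝ) (x : Fin n → ℝ)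

def valMat (α : Fin 3) : Matrix (Fin n) (Fin n) ℝ :=
  Matrix.of fun P Q ↦ J α P Q x

def fderivMat (v : Fin n → ℝ) (α : Fin 3) : Matrix (Fin n) (Fin n) ℝ :=
  Matrix.of fun P Q ↦ fderiv ℝ (J α P Q) x v

def pdRowMat (X : Fin n) (α : Fin 3) : Matrix (Fin n) (Fin n) ℝ :=
  Matrix.of fun P Q ↦ pd P (J α X Q) x

variable {J x} {U : Set (Fin n → ℝ)}

theorem isQuaternionicTriple_valMat (hJ : IsAlmostHypercomplexOn J U) (hx : x ∈ U) :
    IsQuaternionicTriple (valMat J x) := by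
  intro α β
  ext P Q
  simp only [valMat, Matrix.mul_apply, Matrix.add_apply, Matrix.sum_apply, Matrix.smul_apply,
    Matrix.of_apply, smul_eq_mul, hJ.2 α β P Q x hx]
  congr 1
  split_ifs <;> simp_all

theorem isQuaternionicVariation_fderivMat (hU : IsOpen U) (hJ : IsAlmostHypercomplexOn J U)
    (hx : x ∈ U) (v : Fin n → ℝ) : IsQuaternionicVariation (valMat J x) (fderivMat J x v) := by
  intro α β
  ext P Q
  have hd : ∀ γ P Q, HasFDerivAt (J γ P Q) (fderiv ℝ (J γ P Q) x) x := fun γ P Q ↦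
    (((hJ.1 γ P Q).contDiffAt (hU.mem_nhds hx)).differentiableAt (by norm_num)).hasFDerivAt
  have hprod := HasFDerivAt.fun_sum (u := Finset.univ) fun W _ ↦ (hd α P W).fun_mul (hd β W Q)
  have hquat := (HasFDerivAt.fun_sum (u := Finset.univ) fun γ _ ↦ (hd γ P Q).const_mul
    (epsLC α β γ)).const_add ((if α = β then (-1 : ℝ) else 0) * (if P = Q then 1 else 0))
  have heq := hprod.unique (hquat.congr_of_eventuallyEq
    (Filter.eventuallyEq_of_mem (hU.mem_nhds hx) fun y hy ↦ hJ.2 α β P Q y hy))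
  have hv := congrArg (· v) heq
  simp only [FunLike.coe_sum, Finset.sum_apply, add_apply, FunLike.coe_smul, Pi.smul_apply,
    smul_eq_mul] at hv
  simp only [valMat, fderivMat, Matrix.add_apply, Matrix.mul_apply, Matrix.sum_apply,
    Matrix.smul_apply, Matrix.of_apply, smul_eq_mul, ← hv, ← Finset.sum_add_distrib]
  exact Finset.sum_congr rfl fun W _ ↦ by ring

theorem sum_mul_pd_self_eq_neg (hU : IsOpen U) (hJ : IsAlmostHypercomplexOn J U) (hx : x ∈ U)
    (α : Fin 3) (P X Q : Fin n) :
    ∑ W, J α X W x * pd P (J α W Q) x = -∑ W, pd P (J α X W) x * J α W Q x := by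
  have h := (isQuaternionicVariation_fderivMat hU hJ hx (Pi.single P 1)).mul_self_eq_neg α
  simpa [valMat, fderivMat, Matrix.mul_apply, pd] using congrFun₂ h X Q

theorem obata_add_nijenhuis_eq (hU : IsOpen U) (hJ : IsAlmostHypercomplexOn J U) (hx : x ∈ U)
    (X : Fin n) :
    let K := valMat J x
    let a := fderivMat J x (Pi.single X 1)
    let b := pdRowMat J x X
    let e := fun β ↦ fderivMat J x (K β X)
    Matrix.of (fun P Q ↦ obata J X P Q x + nijenhuis J X P Q x) =
      -(1 / 6 : ℝ) • ∑ α, (a α + b α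
          + (1 / 2 : ℝ) • ∑ β, ∑ γ, epsLC α β γ • (e β γ + K β * b γ)) * K α
        + (1 / 12 : ℝ) • ∑ α, (e α α + b α * K α - K α * b α + K α * a α) := by
  intro K a b e
  ext P Q
  simp only [obata, nijenhuis, K, a, b, e, valMat, fderivMat, pdRowMat, ← sum_mul_pd_eq_fderiv,
    Matrix.of_apply, Matrix.add_apply, Matrix.smul_apply, Matrix.sum_apply, Matrix.sub_apply,
    Matrix.mul_apply, smul_eq_mul]
  simp only [Pi.single_apply, ite_mul, one_mul, zero_mul, Finset.sum_ite_eq', Finset.mem_univ,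
    if_true]
  congr 2
  refine Finset.sum_congr rfl fun α _ ↦ ?_
  rw [← neg_neg (∑ W, pd P (J α X W) x * J α W Q x), ← sum_mul_pd_self_eq_neg hU hJ hx]
  simp only [mul_sub, Finset.sum_sub_distrib]
  ring

end Matrices

/-- for any almost hypercomplex structure `J` on an open `U ⊆ ℝ^{4r}`, the
torsionful connection `Γ = Γ^{Ob} + N` (Obata plus Nijenhuis torsion) makes the three
complex structures covariantly constant:
`∂_X J^α_Y^Z − Γ_{XY}^W J^α_W^Z + Γ_{XW}^Z J^α_Y^W = 0` on `U`. -/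
theorem stmt_5 (r : ℕ) (U : Set (Fin (4 * r) → ℝ)) (hU : IsOpen U)
    (J : Fin 3 → Fin (4 * r) → Fin (4 * r) → (Fin (4 * r) → ℝ) → ℝ)
    (hJ : IsAlmostHypercomplexOn J U) :
    ∀ α X Y Z, ∀ x ∈ U,
      pd X (J α Y Z) x
        - (∑ W, (obata J X Y W x + nijenhuis J X Y W x) * J α W Z x)
        + (∑ W, (obata J X W Z x + nijenhuis J X W Z x) * J α Y W x) = 0 := by
  intro α X Y Z x hx
  have hK := isQuaternionicTriple_valMat hJ hx
  have key := (isQuaternionicVariation_fderivMat hU hJ hx (Pi.single X 1)).commutator_eq hK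
    (fun β ↦ isQuaternionicVariation_fderivMat hU hJ hx (valMat J x β X))
    (obata_add_nijenhuis_eq hU hJ hx X) α
  have hentry := congrFun₂ key Y Z
  simp only [Matrix.sub_apply, Matrix.mul_apply, Matrix.of_apply, valMat, fderivMat,
    mul_comm (J α Y _ x)] at hentry
  rw [pd]
  linarith
end
end

section
/- Let J^1, J^2, J^3 be a quaternionic triple on a real vector space V of dimension 4r, with components J^α_X^Y in some fixed basis, and define the tensor S_{ZW}^{XY} := δ_Z^X δ_W^Y + δ_Z^Y δ_W^X − Σ_α ( J^α_Z^X J^α_W^Y + J^α_Z^Y J^α_W^X ). Then for every α ∈ {1,2,3} and all indices X, Y, Z, W one has the identity Σ_V S_{ZW}^{XV} J^α_V^Y − Σ_V J^α_W^V S_{ZV}^{XY} = 2 Σ_{β,γ} ε^{αβγ} J^β_Z^X J^γ_W^Y. -/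
noncomputable section

/-- The tensor `S_{ZW}^{XY} = δ_Z^X δ_W^Y + δ_Z^Y δ_W^X − Σ_α (J^α_Z^X J^α_W^Y + J^α_Z^Y J^α_W^X)`. -/
def quatS {n : ℕ} (J : Fin 3 → Matrix (Fin n) (Fin n) ℝ) (Z W X Y : Fin n) : ℝ :=
  (if Z = X then (1 : ℝ) else 0) * (if W = Y then 1 else 0)
    + (if Z = Y then (1 : ℝ) else 0) * (if W = X then 1 else 0)
    - ∑ α, (J α Z X * J α W Y + J α Z Y * J α W X)

/-- for a quaternionic triple with matrix components `J^α_X^Y` on a real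
vector space of dimension `4r`, the tensor `S` satisfies
`Σ_V S_{ZW}^{XV} J^α_V^Y − Σ_V J^α_W^V S_{ZV}^{XY} = 2 Σ_{β,γ} ε^{αβγ} J^β_Z^X J^γ_W^Y`. -/
theorem stmt_11 (r : ℕ) (J : Fin 3 → Matrix (Fin (4 * r)) (Fin (4 * r)) ℝ)
    (hJ : ∀ α β, J α * J β =
      (if α = β then (-1 : ℝ) else 0) • (1 : Matrix (Fin (4 * r)) (Fin (4 * r)) ℝ)
        + ∑ γ, epsLC α β γ • J γ) :
    ∀ (α : Fin 3) (X Y Z W : Fin (4 * r)),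
      (∑ V, quatS J Z W X V * J α V Y) - (∑ V, J α W V * quatS J Z V X Y)
        = 2 * ∑ β, ∑ γ, epsLC α β γ * J β Z X * J γ W Y := by
  intro α X Y Z W
  have key : ∀ (a b : Fin 3) (i k : Fin (4 * r)),
      (∑ v, J a i v * J b v k)
        = (if a = b then (-1 : ℝ) else 0) * (if i = k then 1 else 0)
          + ∑ γ, epsLC a b γ * J γ i k := by
    intro a b i k
    have h := congrFun (congrFun (hJ a b) i) k
    simpa only [Matrix.mul_apply, Matrix.add_apply, Matrix.smul_apply, Matrix.one_apply,
      Matrix.sum_apply, smul_eq_mul] using h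
  have e1 : (∑ V, quatS J Z W X V * J α V Y)
      = (if Z = X then (1 : ℝ) else 0) * J α W Y + (if W = X then (1 : ℝ) else 0) * J α Z Y
        - ∑ β, (J β Z X * (∑ V, J β W V * J α V Y) + J β W X * (∑ V, J β Z V * J α V Y)) := by
    have h : ∀ V ∈ (Finset.univ : Finset (Fin (4 * r))), quatS J Z W X V * J α V Y
        = ((if Z = X then (1 : ℝ) else 0) * ((if W = V then (1:ℝ) else 0) * J α V Y)
          + (if W = X then (1 : ℝ) else 0) * ((if Z = V then (1:ℝ) else 0) * J α V Y))
          - ∑ β, (J β Z X * (J β W V * J α V Y) + J β W X * (J β Z V * J α V Y)) := by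
      intro V _
      simp only [quatS, sub_mul, add_mul, Finset.sum_mul]
      congr 1
      · ring
      · exact Finset.sum_congr rfl fun β _ => by ring
    rw [Finset.sum_congr rfl h, Finset.sum_sub_distrib, Finset.sum_add_distrib, Finset.sum_comm]
    simp only [← Finset.mul_sum, Finset.sum_add_distrib]
    simp [Finset.sum_ite_eq, Finset.sum_ite_eq', ite_mul, zero_mul, one_mul]
  have e2 : (∑ V, J α W V * quatS J Z V X Y)
      = (if Z = X then (1 : ℝ) else 0) * J α W Y + (if Z = Y then (1 : ℝ) else 0) * J α W X
        - ∑ β, (J β Z X * (∑ V, J α W V * J β V Y) + J β Z Y * (∑ V, J α W V * J β V X)) := by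
    have h : ∀ V ∈ (Finset.univ : Finset (Fin (4 * r))), J α W V * quatS J Z V X Y
        = ((if Z = X then (1 : ℝ) else 0) * (J α W V * (if V = Y then (1:ℝ) else 0))
          + (if Z = Y then (1 : ℝ) else 0) * (J α W V * (if V = X then (1:ℝ) else 0)))
          - ∑ β, (J β Z X * (J α W V * J β V Y) + J β Z Y * (J α W V * J β V X)) := by
      intro V _
      simp only [quatS, mul_sub, mul_add, Finset.mul_sum]
      congr 1
      · ring
      · exact Finset.sum_congr rfl fun β _ => by ring
    rw [Finset.sum_congr rfl h, Finset.sum_sub_distrib, Finset.sum_add_distrib, Finset.sum_comm]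
    simp only [← Finset.mul_sum, Finset.sum_add_distrib]
    simp [Finset.sum_ite_eq, Finset.sum_ite_eq', mul_ite, mul_zero, mul_one]
  rw [e1, e2]
  simp only [key]
  fin_cases α <;>
    · simp only [Fin.sum_univ_three]
      norm_num [epsLC, Prod.ext_iff, Fin.ext_iff, show ((⟨2, by omega⟩ : Fin 3)) = 2 from rfl]
      split_ifs <;> ring
end
end

section
/- Let V be a real vector space of dimension 4r with r ≥ 2 and a quaternionic triple J^1, J^2, J^3. Let R be a curvature-type tensor on V which is Ricci-flat (its Ricci contraction vanishes identically) and which normalizes the quaternionic structure: there exist bilinear forms 𝓡^1, 𝓡^2, 𝓡^3 on V with R(x,y) ∘ J^α − J^α ∘ R(x,y) = 2 Σ_{β,γ} ε^{αβγ} 𝓡^γ(x,y) · J^β for all x, y and α. Then 𝓡^α = 0 for every α; in particular R(x,y) commutes with each J^α. (This is the vanishing of the SU(2) part of the Weyl part of a quaternionic curvature in dimension greater than four.) -/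
noncomputable section

theorem epsLC_000 : epsLC 0 0 0 = 0 := by unfold epsLC; rw [if_neg (by decide), if_neg (by decide)]
theorem epsLC_001 : epsLC 0 0 1 = 0 := by unfold epsLC; rw [if_neg (by decide), if_neg (by decide)]
theorem epsLC_002 : epsLC 0 0 2 = 0 := by unfold epsLC; rw [if_neg (by decide), if_neg (by decide)]
theorem epsLC_010 : epsLC 0 1 0 = 0 := by unfold epsLC; rw [if_neg (by decide), if_neg (by decide)]
theorem epsLC_011 : epsLC 0 1 1 = 0 := by unfold epsLC; rw [if_neg (by decide), if_neg (by decide)]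
theorem epsLC_012 : epsLC 0 1 2 = 1 := by unfold epsLC; rw [if_pos (by decide)]
theorem epsLC_020 : epsLC 0 2 0 = 0 := by unfold epsLC; rw [if_neg (by decide), if_neg (by decide)]
theorem epsLC_021 : epsLC 0 2 1 = -1 := by unfold epsLC; rw [if_neg (by decide), if_pos (by decide)]
theorem epsLC_022 : epsLC 0 2 2 = 0 := by unfold epsLC; rw [if_neg (by decide), if_neg (by decide)]
theorem epsLC_100 : epsLC 1 0 0 = 0 := by unfold epsLC; rw [if_neg (by decide), if_neg (by decide)]
theorem epsLC_101 : epsLC 1 0 1 = 0 := by unfold epsLC; rw [if_neg (by decide), if_neg (by decide)]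
theorem epsLC_102 : epsLC 1 0 2 = -1 := by unfold epsLC; rw [if_neg (by decide), if_pos (by decide)]
theorem epsLC_110 : epsLC 1 1 0 = 0 := by unfold epsLC; rw [if_neg (by decide), if_neg (by decide)]
theorem epsLC_111 : epsLC 1 1 1 = 0 := by unfold epsLC; rw [if_neg (by decide), if_neg (by decide)]
theorem epsLC_112 : epsLC 1 1 2 = 0 := by unfold epsLC; rw [if_neg (by decide), if_neg (by decide)]
theorem epsLC_120 : epsLC 1 2 0 = 1 := by unfold epsLC; rw [if_pos (by decide)]
theorem epsLC_121 : epsLC 1 2 1 = 0 := by unfold epsLC; rw [if_neg (by decide), if_neg (by decide)]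
theorem epsLC_122 : epsLC 1 2 2 = 0 := by unfold epsLC; rw [if_neg (by decide), if_neg (by decide)]
theorem epsLC_200 : epsLC 2 0 0 = 0 := by unfold epsLC; rw [if_neg (by decide), if_neg (by decide)]
theorem epsLC_201 : epsLC 2 0 1 = 1 := by unfold epsLC; rw [if_pos (by decide)]
theorem epsLC_202 : epsLC 2 0 2 = 0 := by unfold epsLC; rw [if_neg (by decide), if_neg (by decide)]
theorem epsLC_210 : epsLC 2 1 0 = -1 := by unfold epsLC; rw [if_neg (by decide), if_pos (by decide)]
theorem epsLC_211 : epsLC 2 1 1 = 0 := by unfold epsLC; rw [if_neg (by decide), if_neg (by decide)]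
theorem epsLC_212 : epsLC 2 1 2 = 0 := by unfold epsLC; rw [if_neg (by decide), if_neg (by decide)]
theorem epsLC_220 : epsLC 2 2 0 = 0 := by unfold epsLC; rw [if_neg (by decide), if_neg (by decide)]
theorem epsLC_221 : epsLC 2 2 1 = 0 := by unfold epsLC; rw [if_neg (by decide), if_neg (by decide)]
theorem epsLC_222 : epsLC 2 2 2 = 0 := by unfold epsLC; rw [if_neg (by decide), if_neg (by decide)]

/-- Trace of a rank-one map `z ↦ f(z) • v` is `f v`. -/
theorem trace_rankOne {V : Type*} [AddCommGroup V] [Module ℝ V] [FiniteDimensional ℝ V]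
    (f : V →ₗ[ℝ] ℝ) (v : V) : LinearMap.trace ℝ V (f.smulRight v) = f v := by
  have h1 : f.smulRight v = (LinearMap.toSpanSingleton ℝ V v) ∘ₗ f := by
    ext z; simp [LinearMap.toSpanSingleton_apply]
  rw [h1, LinearMap.trace_comp_comm']
  have h2 : f ∘ₗ (LinearMap.toSpanSingleton ℝ V v) = (f v) • LinearMap.id := by
    ext; simp [mul_comm]
  rw [h2, map_smul, LinearMap.trace_id]
  simp

set_option maxHeartbeats 2000000 in
/-- a Ricci-flat curvature-type tensor on a `4r`-dimensional quaternionic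
vector space with `r ≥ 2` which normalizes the quaternionic structure has vanishing
SU(2) curvatures `𝓡^α`; in particular its values commute with every `J^α`. -/
theorem stmt_13 (r : ℕ) (hr : 2 ≤ r) (V : Type*) [AddCommGroup V] [Module ℝ V]
    [FiniteDimensional ℝ V] (hdim : Module.finrank ℝ V = 4 * r)
    (J : Fin 3 → V →ₗ[ℝ] V) (hJ : QuatTriple J)
    (R : V →ₗ[ℝ] V →ₗ[ℝ] (V →ₗ[ℝ] V))
    (hanti : ∀ x y, R x y = - R y x)
    (hbianchi : ∀ x y z, R x y z + R z x y + R y z x = 0)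
    (hricciflat : ∀ x y, ricci R x y = 0)
    (𝓡 : Fin 3 → V →ₗ[ℝ] V →ₗ[ℝ] ℝ)
    (hnorm : ∀ α x y, (R x y) ∘ₗ (J α) - (J α) ∘ₗ (R x y)
      = ∑ β, ∑ γ, (2 * epsLC α β γ * 𝓡 γ x y) • J β) :
    (∀ α, 𝓡 α = 0) ∧
    (∀ α x y, (R x y) ∘ₗ (J α) = (J α) ∘ₗ (R x y)) := by
  have hr' : (2:ℝ) ≤ (r:ℝ) := by exact_mod_cast hr
  -- quaternion composition lemmas
  have c00 : (J 0) ∘ₗ (J 0) = -LinearMap.id := by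
    simpa [epsLC, Fin.sum_univ_three] using hJ 0 0
  have c11 : (J 1) ∘ₗ (J 1) = -LinearMap.id := by
    simpa [epsLC, Fin.sum_univ_three] using hJ 1 1
  have c22 : (J 2) ∘ₗ (J 2) = -LinearMap.id := by
    simpa [epsLC, Fin.sum_univ_three] using hJ 2 2
  have c01 : (J 0) ∘ₗ (J 1) = J 2 := by
    simpa [epsLC, Fin.sum_univ_three] using hJ 0 1
  have c10 : (J 1) ∘ₗ (J 0) = -J 2 := by
    simpa [epsLC, Fin.sum_univ_three] using hJ 1 0
  have c12 : (J 1) ∘ₗ (J 2) = J 0 := by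
    simpa [epsLC, Fin.sum_univ_three] using hJ 1 2
  have c21 : (J 2) ∘ₗ (J 1) = -J 0 := by
    simpa [epsLC, Fin.sum_univ_three] using hJ 2 1
  have c20 : (J 2) ∘ₗ (J 0) = J 1 := by
    simpa [epsLC, Fin.sum_univ_three] using hJ 2 0
  have c02 : (J 0) ∘ₗ (J 2) = -J 1 := by
    simpa [epsLC, Fin.sum_univ_three] using hJ 0 2
  -- pointwise versions
  have p00 : ∀ v, J 0 (J 0 v) = -v := fun v => by
    simpa using LinearMap.congr_fun c00 v
  have p11 : ∀ v, J 1 (J 1 v) = -v := fun v => by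
    simpa using LinearMap.congr_fun c11 v
  have p22 : ∀ v, J 2 (J 2 v) = -v := fun v => by
    simpa using LinearMap.congr_fun c22 v
  have p01 : ∀ v, J 0 (J 1 v) = J 2 v := fun v => by
    simpa using LinearMap.congr_fun c01 v
  have p10 : ∀ v, J 1 (J 0 v) = -(J 2 v) := fun v => by
    simpa using LinearMap.congr_fun c10 v
  have p12 : ∀ v, J 1 (J 2 v) = J 0 v := fun v => by
    simpa using LinearMap.congr_fun c12 v
  have p21 : ∀ v, J 2 (J 1 v) = -(J 0 v) := fun v => by
    simpa using LinearMap.congr_fun c21 v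
  have p20 : ∀ v, J 2 (J 0 v) = J 1 v := fun v => by
    simpa using LinearMap.congr_fun c20 v
  have p02 : ∀ v, J 0 (J 2 v) = -(J 1 v) := fun v => by
    simpa using LinearMap.congr_fun c02 v
  -- trace facts
  have trid : LinearMap.trace ℝ V LinearMap.id = (4*r : ℝ) := by
    rw [LinearMap.trace_id, hdim]; push_cast; ring
  have trJ2 : LinearMap.trace ℝ V (J 2) = 0 := by
    have h : LinearMap.trace ℝ V (J 2) = - LinearMap.trace ℝ V (J 2) := by
      conv_lhs => rw [← c01]
      rw [LinearMap.trace_comp_comm', c10, map_neg]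
    linarith
  have trJ0 : LinearMap.trace ℝ V (J 0) = 0 := by
    have h : LinearMap.trace ℝ V (J 0) = - LinearMap.trace ℝ V (J 0) := by
      conv_lhs => rw [← c12]
      rw [LinearMap.trace_comp_comm', c21, map_neg]
    linarith
  have trJ1 : LinearMap.trace ℝ V (J 1) = 0 := by
    have h : LinearMap.trace ℝ V (J 1) = - LinearMap.trace ℝ V (J 1) := by
      conv_lhs => rw [← c20]
      rw [LinearMap.trace_comp_comm', c02, map_neg]
    linarith
  -- trace of J γ ∘ R x y in terms of 𝓡
  have hτ0 : ∀ x y, LinearMap.trace ℝ V ((J 0) ∘ₗ (R x y)) = -(4*(r:ℝ)) * 𝓡 0 x y := by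
    intro x y
    have h := congrArg (fun f => LinearMap.trace ℝ V ((J 2) ∘ₗ f)) (hnorm 1 x y)
    simp only [LinearMap.comp_sub, map_sub, Fin.sum_univ_three, LinearMap.comp_add, map_add,
      LinearMap.comp_smul, map_smul, smul_eq_mul] at h
    have e1 : LinearMap.trace ℝ V ((J 2) ∘ₗ ((R x y) ∘ₗ (J 1)))
        = LinearMap.trace ℝ V ((J 0) ∘ₗ (R x y)) := by
      rw [← LinearMap.comp_assoc, LinearMap.trace_comp_comm' (J 1) ((J 2) ∘ₗ (R x y)),
        ← LinearMap.comp_assoc, c12]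
    have e2 : (J 2) ∘ₗ ((J 1) ∘ₗ (R x y)) = -((J 0) ∘ₗ (R x y)) := by
      rw [← LinearMap.comp_assoc, c21, LinearMap.neg_comp]
    rw [e1, e2, map_neg, c20, c21, c22, map_neg] at h
    simp only [epsLC_000, epsLC_001, epsLC_002, epsLC_010, epsLC_011, epsLC_012, epsLC_020, epsLC_021, epsLC_022, epsLC_100, epsLC_101, epsLC_102, epsLC_110, epsLC_111, epsLC_112, epsLC_120, epsLC_121, epsLC_122, epsLC_200, epsLC_201, epsLC_202, epsLC_210, epsLC_211, epsLC_212, epsLC_220, epsLC_221, epsLC_222] at h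
    norm_num [trJ0, trJ1, trJ2, map_neg, trid] at h
    linarith
  have hτ1 : ∀ x y, LinearMap.trace ℝ V ((J 1) ∘ₗ (R x y)) = -(4*(r:ℝ)) * 𝓡 1 x y := by
    intro x y
    have h := congrArg (fun f => LinearMap.trace ℝ V ((J 0) ∘ₗ f)) (hnorm 2 x y)
    simp only [LinearMap.comp_sub, map_sub, Fin.sum_univ_three, LinearMap.comp_add, map_add,
      LinearMap.comp_smul, map_smul, smul_eq_mul] at h
    have e1 : LinearMap.trace ℝ V ((J 0) ∘ₗ ((R x y) ∘ₗ (J 2)))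
        = LinearMap.trace ℝ V ((J 1) ∘ₗ (R x y)) := by
      rw [← LinearMap.comp_assoc, LinearMap.trace_comp_comm' (J 2) ((J 0) ∘ₗ (R x y)),
        ← LinearMap.comp_assoc, c20]
    have e2 : (J 0) ∘ₗ ((J 2) ∘ₗ (R x y)) = -((J 1) ∘ₗ (R x y)) := by
      rw [← LinearMap.comp_assoc, c02, LinearMap.neg_comp]
    rw [e1, e2, map_neg, c00, c01, c02, map_neg] at h
    simp only [epsLC_000, epsLC_001, epsLC_002, epsLC_010, epsLC_011, epsLC_012, epsLC_020, epsLC_021, epsLC_022, epsLC_100, epsLC_101, epsLC_102, epsLC_110, epsLC_111, epsLC_112, epsLC_120, epsLC_121, epsLC_122, epsLC_200, epsLC_201, epsLC_202, epsLC_210, epsLC_211, epsLC_212, epsLC_220, epsLC_221, epsLC_222] at h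
    norm_num [trJ0, trJ1, trJ2, map_neg, trid] at h
    linarith
  have hτ2 : ∀ x y, LinearMap.trace ℝ V ((J 2) ∘ₗ (R x y)) = -(4*(r:ℝ)) * 𝓡 2 x y := by
    intro x y
    have h := congrArg (fun f => LinearMap.trace ℝ V ((J 1) ∘ₗ f)) (hnorm 0 x y)
    simp only [LinearMap.comp_sub, map_sub, Fin.sum_univ_three, LinearMap.comp_add, map_add,
      LinearMap.comp_smul, map_smul, smul_eq_mul] at h
    have e1 : LinearMap.trace ℝ V ((J 1) ∘ₗ ((R x y) ∘ₗ (J 0)))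
        = LinearMap.trace ℝ V ((J 2) ∘ₗ (R x y)) := by
      rw [← LinearMap.comp_assoc, LinearMap.trace_comp_comm' (J 0) ((J 1) ∘ₗ (R x y)),
        ← LinearMap.comp_assoc, c01]
    have e2 : (J 1) ∘ₗ ((J 0) ∘ₗ (R x y)) = -((J 2) ∘ₗ (R x y)) := by
      rw [← LinearMap.comp_assoc, c10, LinearMap.neg_comp]
    rw [e1, e2, map_neg, c10, c11, c12, map_neg] at h
    simp only [epsLC_000, epsLC_001, epsLC_002, epsLC_010, epsLC_011, epsLC_012, epsLC_020, epsLC_021, epsLC_022, epsLC_100, epsLC_101, epsLC_102, epsLC_110, epsLC_111, epsLC_112, epsLC_120, epsLC_121, epsLC_122, epsLC_200, epsLC_201, epsLC_202, epsLC_210, epsLC_211, epsLC_212, epsLC_220, epsLC_221, epsLC_222] at h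
    norm_num [trJ0, trJ1, trJ2, map_neg, trid] at h
    linarith
  have hτ : ∀ γ x y, LinearMap.trace ℝ V ((J γ) ∘ₗ (R x y)) = -(4*(r:ℝ)) * 𝓡 γ x y := by
    intro γ
    fin_cases γ
    · exact hτ0
    · exact hτ1
    · exact hτ2
  -- antisymmetry of 𝓡
  have h4r : (0:ℝ) < 4*(r:ℝ) := by linarith
  have hA : ∀ γ u v, 𝓡 γ u v = -𝓡 γ v u := by
    intro γ u v
    have h1 := hτ γ u v
    have h2 := hτ γ v u
    have h3 : (J γ) ∘ₗ (R u v) = -((J γ) ∘ₗ (R v u)) := by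
      rw [hanti u v, LinearMap.comp_neg]
    rw [h3, map_neg, h2] at h1
    have h5 : (4*(r:ℝ)) * (𝓡 γ u v + 𝓡 γ v u) = 0 := by linarith
    have h6 := mul_eq_zero.mp h5
    rcases h6 with h6 | h6
    · exact absurd h6 (ne_of_gt h4r)
    · linarith
  -- the contracted Bianchi identity
  have hTr : ∀ (α : Fin 3) (x y : V),
      -(4*(r:ℝ)) * 𝓡 α x y
        = (∑ β, ∑ γ, 2 * epsLC α β γ * 𝓡 γ (J β y) x)
          + (∑ β, ∑ γ, 2 * epsLC α β γ * 𝓡 γ y (J β x)) := by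
    intro α x y
    have hB : (J α) ∘ₗ (R x y) + (J α) ∘ₗ ((R.flip x).flip y) + (J α) ∘ₗ ((R y).flip x) = 0 := by
      ext z
      simp only [LinearMap.add_apply, LinearMap.comp_apply, LinearMap.flip_apply,
        LinearMap.zero_apply]
      rw [← map_add, ← map_add, hbianchi x y z, map_zero]
    have hK1 : (J α) ∘ₗ ((R.flip x).flip y)
        = (R.flip x).flip (J α y)
          - ∑ β, ∑ γ, (2 * epsLC α β γ) • (((𝓡 γ).flip x).smulRight (J β y)) := by
      ext z
      have h := LinearMap.congr_fun (hnorm α z x) y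
      simp only [LinearMap.sub_apply, LinearMap.comp_apply, LinearMap.sum_apply,
        LinearMap.smul_apply, LinearMap.flip_apply, LinearMap.smulRight_apply, smul_smul] at h ⊢
      rw [← h]
      abel
    have hK2 : (J α) ∘ₗ ((R y).flip x)
        = (R y).flip (J α x)
          - ∑ β, ∑ γ, (2 * epsLC α β γ) • (((𝓡 γ) y).smulRight (J β x)) := by
      ext z
      have h := LinearMap.congr_fun (hnorm α y z) x
      simp only [LinearMap.sub_apply, LinearMap.comp_apply, LinearMap.sum_apply,
        LinearMap.smul_apply, LinearMap.flip_apply, LinearMap.smulRight_apply, smul_smul] at h ⊢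
      rw [← h]
      abel
    have t1 : LinearMap.trace ℝ V ((J α) ∘ₗ ((R.flip x).flip y))
        = -(∑ β, ∑ γ, 2 * epsLC α β γ * 𝓡 γ (J β y) x) := by
      rw [hK1, map_sub]
      have h0 : LinearMap.trace ℝ V ((R.flip x).flip (J α y)) = 0 := hricciflat x (J α y)
      rw [h0, zero_sub, neg_inj]
      rw [map_sum]
      refine Finset.sum_congr rfl fun β _ => ?_
      rw [map_sum]
      refine Finset.sum_congr rfl fun γ _ => ?_
      rw [map_smul, trace_rankOne]
      simp [LinearMap.flip_apply]
    have t2 : LinearMap.trace ℝ V ((J α) ∘ₗ ((R y).flip x))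
        = -(∑ β, ∑ γ, 2 * epsLC α β γ * 𝓡 γ y (J β x)) := by
      rw [hK2, map_sub]
      have hflip : (R y).flip (J α x) = -((R.flip y).flip (J α x)) := by
        ext z
        simp only [LinearMap.flip_apply, LinearMap.neg_apply]
        rw [hanti y z]
        simp
      have h0 : LinearMap.trace ℝ V ((R y).flip (J α x)) = 0 := by
        rw [hflip, map_neg]
        have := hricciflat y (J α x)
        simp only [ricci] at this
        rw [this, neg_zero]
      rw [h0, zero_sub, neg_inj]
      rw [map_sum]
      refine Finset.sum_congr rfl fun β _ => ?_
      rw [map_sum]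
      refine Finset.sum_congr rfl fun γ _ => ?_
      rw [map_smul, trace_rankOne]
      simp
    have hsum := congrArg (LinearMap.trace ℝ V) hB
    rw [map_add, map_add, map_zero, t1, t2, hτ α x y] at hsum
    linarith
  -- the key scalar equations
  have E0 : ∀ x y, (2*(r:ℝ)) * 𝓡 0 x y
      = 𝓡 2 (J 1 x) y + 𝓡 2 x (J 1 y) - 𝓡 1 (J 2 x) y - 𝓡 1 x (J 2 y) := by
    intro x y
    have h := hTr 0 x y
    simp only [Fin.sum_univ_three] at h
    simp only [epsLC_000, epsLC_001, epsLC_002, epsLC_010, epsLC_011, epsLC_012, epsLC_020, epsLC_021, epsLC_022, epsLC_100, epsLC_101, epsLC_102, epsLC_110, epsLC_111, epsLC_112, epsLC_120, epsLC_121, epsLC_122, epsLC_200, epsLC_201, epsLC_202, epsLC_210, epsLC_211, epsLC_212, epsLC_220, epsLC_221, epsLC_222] at h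
    norm_num at h
    linarith [hA 2 (J 1 y) x, hA 1 (J 2 y) x, hA 2 y (J 1 x), hA 1 y (J 2 x)]
  have E1 : ∀ x y, (2*(r:ℝ)) * 𝓡 1 x y
      = 𝓡 0 (J 2 x) y + 𝓡 0 x (J 2 y) - 𝓡 2 (J 0 x) y - 𝓡 2 x (J 0 y) := by
    intro x y
    have h := hTr 1 x y
    simp only [Fin.sum_univ_three] at h
    simp only [epsLC_000, epsLC_001, epsLC_002, epsLC_010, epsLC_011, epsLC_012, epsLC_020, epsLC_021, epsLC_022, epsLC_100, epsLC_101, epsLC_102, epsLC_110, epsLC_111, epsLC_112, epsLC_120, epsLC_121, epsLC_122, epsLC_200, epsLC_201, epsLC_202, epsLC_210, epsLC_211, epsLC_212, epsLC_220, epsLC_221, epsLC_222] at h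
    norm_num at h
    linarith [hA 0 (J 2 y) x, hA 2 (J 0 y) x, hA 0 y (J 2 x), hA 2 y (J 0 x)]
  have E2 : ∀ x y, (2*(r:ℝ)) * 𝓡 2 x y
      = 𝓡 1 (J 0 x) y + 𝓡 1 x (J 0 y) - 𝓡 0 (J 1 x) y - 𝓡 0 x (J 1 y) := by
    intro x y
    have h := hTr 2 x y
    simp only [Fin.sum_univ_three] at h
    simp only [epsLC_000, epsLC_001, epsLC_002, epsLC_010, epsLC_011, epsLC_012, epsLC_020, epsLC_021, epsLC_022, epsLC_100, epsLC_101, epsLC_102, epsLC_110, epsLC_111, epsLC_112, epsLC_120, epsLC_121, epsLC_122, epsLC_200, epsLC_201, epsLC_202, epsLC_210, epsLC_211, epsLC_212, epsLC_220, epsLC_221, epsLC_222] at h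
    norm_num at h
    linarith [hA 1 (J 0 y) x, hA 0 (J 1 y) x, hA 1 y (J 0 x), hA 0 y (J 1 x)]
  -- nonvanishing factor
  have hfac : (16*(r:ℝ)^4+32*(r:ℝ)^3-16*(r:ℝ)^2-32*(r:ℝ)) ≠ 0 := by
    have h1 : (0:ℝ) < (r:ℝ) := by linarith
    have h2 : (0:ℝ) < (r:ℝ) - 1 := by linarith
    have h3 : (0:ℝ) < (r:ℝ) + 1 := by linarith
    have h4 : (0:ℝ) < (r:ℝ) + 2 := by linarith
    have : (16*(r:ℝ)^4+32*(r:ℝ)^3-16*(r:ℝ)^2-32*(r:ℝ))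
        = 16*(r:ℝ)*((r:ℝ)-1)*((r:ℝ)+1)*((r:ℝ)+2) := by ring
    rw [this]
    positivity
  -- vanishing of 𝓡 0
  have hv0 : ∀ x y, 𝓡 0 x y = 0 := by
    intro x y
    have q1 := E0 x y
    have q2 := E0 (J 0 x) (J 0 y)
    have q3 := E0 (J 1 x) (J 1 y)
    have q4 := E0 (J 2 x) (J 2 y)
    have q5 := E1 x (J 2 y)
    have q6 := E1 (J 0 x) (J 1 y)
    have q7 := E1 (J 1 x) (J 0 y)
    have q8 := E1 (J 2 x) y
    have q9 := E2 x (J 1 y)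
    have q10 := E2 (J 0 x) (J 2 y)
    have q11 := E2 (J 1 x) y
    have q12 := E2 (J 2 x) (J 0 y)
    simp only [p00, p01, p02, p10, p11, p12, p20, p21, p22, map_neg,
      LinearMap.neg_apply] at q2 q3 q4 q5 q6 q7 q8 q9 q10 q11 q12
    have hp : (16*(r:ℝ)^4+32*(r:ℝ)^3-16*(r:ℝ)^2-32*(r:ℝ)) * 𝓡 0 x y = 0 := by
      linear_combination (8*(r:ℝ)^3+16*(r:ℝ)^2-4)*q1 + (-4)*q2 + (-4-4*(r:ℝ))*q3
        + (-4-4*(r:ℝ))*q4 + (-4*(r:ℝ)^2-6*(r:ℝ))*q5 + (2*(r:ℝ))*q6 + (2*(r:ℝ))*q7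
        + (-4*(r:ℝ)^2-6*(r:ℝ))*q8 + (4*(r:ℝ)^2+6*(r:ℝ))*q9 + (2*(r:ℝ))*q10
        + (4*(r:ℝ)^2+6*(r:ℝ))*q11 + (2*(r:ℝ))*q12
    exact (mul_eq_zero.mp hp).resolve_left hfac
  have hv1 : ∀ x y, 𝓡 1 x y = 0 := by
    intro x y
    have q1 := E0 x (J 2 y)
    have q2 := E0 (J 0 x) (J 1 y)
    have q3 := E0 (J 1 x) (J 0 y)
    have q4 := E0 (J 2 x) y
    have q5 := E1 x y
    have q6 := E1 (J 0 x) (J 0 y)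
    have q7 := E1 (J 1 x) (J 1 y)
    have q8 := E1 (J 2 x) (J 2 y)
    have q9 := E2 x (J 0 y)
    have q10 := E2 (J 0 x) y
    have q11 := E2 (J 1 x) (J 2 y)
    have q12 := E2 (J 2 x) (J 1 y)
    simp only [p00, p01, p02, p10, p11, p12, p20, p21, p22, map_neg,
      LinearMap.neg_apply] at q1 q2 q3 q4 q6 q7 q8 q9 q10 q11 q12
    have hp : (16*(r:ℝ)^4+32*(r:ℝ)^3-16*(r:ℝ)^2-32*(r:ℝ)) * 𝓡 1 x y = 0 := by
      linear_combination (4*(r:ℝ)^2+6*(r:ℝ))*q1 + (2*(r:ℝ))*q2 + (2*(r:ℝ))*q3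
        + (4*(r:ℝ)^2+6*(r:ℝ))*q4 + (8*(r:ℝ)^3+16*(r:ℝ)^2-4)*q5 + (-4-4*(r:ℝ))*q6
        + (-4)*q7 + (-4-4*(r:ℝ))*q8 + (-4*(r:ℝ)^2-6*(r:ℝ))*q9 + (-4*(r:ℝ)^2-6*(r:ℝ))*q10
        + (2*(r:ℝ))*q11 + (2*(r:ℝ))*q12
    exact (mul_eq_zero.mp hp).resolve_left hfac
  have hv2 : ∀ x y, 𝓡 2 x y = 0 := by
    intro x y
    have q1 := E0 x (J 1 y)
    have q2 := E0 (J 0 x) (J 2 y)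
    have q3 := E0 (J 1 x) y
    have q4 := E0 (J 2 x) (J 0 y)
    have q5 := E1 x (J 0 y)
    have q6 := E1 (J 0 x) y
    have q7 := E1 (J 1 x) (J 2 y)
    have q8 := E1 (J 2 x) (J 1 y)
    have q9 := E2 x y
    have q10 := E2 (J 0 x) (J 0 y)
    have q11 := E2 (J 1 x) (J 1 y)
    have q12 := E2 (J 2 x) (J 2 y)
    simp only [p00, p01, p02, p10, p11, p12, p20, p21, p22, map_neg,
      LinearMap.neg_apply] at q1 q2 q3 q4 q5 q6 q7 q8 q10 q11 q12
    have hp : (16*(r:ℝ)^4+32*(r:ℝ)^3-16*(r:ℝ)^2-32*(r:ℝ)) * 𝓡 2 x y = 0 := by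
      linear_combination (-4*(r:ℝ)^2-6*(r:ℝ))*q1 + (2*(r:ℝ))*q2 + (-4*(r:ℝ)^2-6*(r:ℝ))*q3
        + (2*(r:ℝ))*q4 + (4*(r:ℝ)^2+6*(r:ℝ))*q5 + (4*(r:ℝ)^2+6*(r:ℝ))*q6 + (2*(r:ℝ))*q7
        + (2*(r:ℝ))*q8 + (8*(r:ℝ)^3+16*(r:ℝ)^2-4)*q9 + (-4-4*(r:ℝ))*q10
        + (-4-4*(r:ℝ))*q11 + (-4)*q12
    exact (mul_eq_zero.mp hp).resolve_left hfac
  have hvanish : ∀ α, 𝓡 α = 0 := by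
    intro α
    fin_cases α
    · ext x y; exact hv0 x y
    · ext x y; exact hv1 x y
    · ext x y; exact hv2 x y
  refine ⟨hvanish, fun α x y => ?_⟩
  have h := hnorm α x y
  have hz : ∀ β γ : Fin 3, (2 * epsLC α β γ * 𝓡 γ x y) • J β = 0 := by
    intro β γ
    rw [hvanish γ]
    simp
  simp only [hz, Finset.sum_const_zero] at h
  exact sub_eq_zero.mp h
end
end

section
/- Let D be an integer with D > 2, η a nondegenerate symmetric real D×D matrix with inverse η^{μν}, S a finite-dimensional complex vector space, and γ_1, …, γ_D ∈ End(S) satisfying the Clifford relations γ_μ γ_ν + γ_ν γ_μ = 2 η_{μν} · id_S for all μ, ν. Suppose ε : ℝ^D → S is a smooth map satisfying the flat conformal Killing spinor (twistor) equation ∂_μ ε(x) = (1/D) γ_μ Σ_{ν,ρ} η^{νρ} γ_ρ ∂_ν ε(x) for all μ and all x ∈ ℝ^D. Then ε is affine of Clifford type: there exist constant spinors ε₀, η₀ ∈ S such that ε(x) = ε₀ + Σ_μ x^μ γ_μ η₀ for all x ∈ ℝ^D. -/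
/-!
Differentiating the twistor equation shows that for each `μ` the row `ν ↦ ∂_μ ∂_ν ε(x)` of the
Hessian again solves it, and the Hessian is symmetric. For a symmetric `T_{μν}` whose rows solve
the twistor equation, put `Ψ_μ = γ^ν T_{μν}` and `Θ = γ^μ Ψ_μ`. Then `T_{μν} = γ_ν Ψ_μ / D`, and
symmetry together with `γ^ν γ_μ = 2 δ^ν_μ - γ_μ γ^ν` gives `(D - 2) Ψ_μ = -γ_μ Θ`; contracting
with `γ^μ` and using `γ^μ γ_μ = D` gives `(D - 2) Θ = -D Θ`. Hence `Θ = 0`, then `Ψ = 0` and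
`T = 0` as soon as `D > 2`. So `ε` is affine, and the twistor equation at the origin writes its
linear part as `x^μ γ_μ η₀` with `η₀ = γ^ν ∂_ν ε(0) / D`.
-/

noncomputable section

open Finset

section Algebra

variable {ι S : Type*} [Fintype ι] [DecidableEq ι] [AddCommGroup S] [Module ℝ S]
  (η : Matrix ι ι ℝ) (γ : ι → S →ₗ[ℝ] S)

/-- The contraction `γ^ν v_ν = η^{νρ} γ_ρ v_ν`. -/
def cliffordSlash : (ι → S) →ₗ[ℝ] S :=
  ∑ ν, ∑ ρ, η⁻¹ ν ρ • γ ρ ∘ₗ LinearMap.proj ν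

theorem cliffordSlash_apply (v : ι → S) :
    cliffordSlash η γ v = ∑ ν, ∑ ρ, η⁻¹ ν ρ • γ ρ (v ν) := by
  simp [cliffordSlash]

def twistorOperator : (ι → S) →ₗ[ℝ] ι → S :=
  (1 / (Fintype.card ι : ℝ)) • LinearMap.pi fun μ => γ μ ∘ₗ cliffordSlash η γ

theorem twistorOperator_apply (v : ι → S) (μ : ι) :
    twistorOperator η γ v μ = (1 / (Fintype.card ι : ℝ)) • γ μ (cliffordSlash η γ v) :=
  rfl

def IsTwistor (v : ι → S) : Prop :=
  twistorOperator η γ v = v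

variable {η γ}

theorem cliffordSlash_gamma_comp (hη : IsUnit η.det)
    (hcl : ∀ μ ν v, γ μ (γ ν v) + γ ν (γ μ v) = (2 * η μ ν) • v) (μ : ι) (v : ι → S) :
    cliffordSlash η γ (fun ν => γ μ (v ν)) = (2 : ℝ) • v μ - γ μ (cliffordSlash η γ v) := by
  have hδ : ∑ ν, (∑ ρ, η⁻¹ ν ρ * η ρ μ) • v ν = v μ := by
    simp [← Matrix.mul_apply, Matrix.nonsing_inv_mul η hη, Matrix.one_apply]
  simp only [cliffordSlash_apply, map_sum, map_smul, ← hδ, smul_sum, ← sum_sub_distrib,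
    sum_smul, smul_smul]
  refine sum_congr rfl fun ν _ => sum_congr rfl fun ρ _ => ?_
  rw [eq_sub_of_add_eq (hcl ρ μ (v ν)), smul_sub, smul_smul]
  ring_nf

theorem cliffordSlash_gamma (hsym : η.IsSymm) (hη : IsUnit η.det)
    (hcl : ∀ μ ν v, γ μ (γ ν v) + γ ν (γ μ v) = (2 * η μ ν) • v) (w : S) :
    cliffordSlash η γ (fun ν => γ ν w) = (Fintype.card ι : ℝ) • w := by
  have hsym' : ∀ ν ρ, η⁻¹ ν ρ = η⁻¹ ρ ν := fun ν ρ => hsym.inv.apply ρ ν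
  have htr : ∑ ν, ∑ ρ, η⁻¹ ν ρ * η ρ ν = Fintype.card ι := by
    simp [← Matrix.mul_apply, Matrix.nonsing_inv_mul η hη]
  have hswap : cliffordSlash η γ (fun ν => γ ν w) = ∑ ν, ∑ ρ, η⁻¹ ν ρ • γ ν (γ ρ w) := by
    rw [cliffordSlash_apply, sum_comm]
    simp only [hsym']
  apply smul_right_injective S (two_ne_zero' ℝ)
  calc (2 : ℝ) • cliffordSlash η γ (fun ν => γ ν w)
      = ∑ ν, ∑ ρ, η⁻¹ ν ρ • (γ ρ (γ ν w) + γ ν (γ ρ w)) := by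
        rw [two_smul]; nth_rewrite 2 [hswap]
        simp only [cliffordSlash_apply, smul_add, sum_add_distrib]
    _ = (2 : ℝ) • (Fintype.card ι : ℝ) • w := by
        simp only [hcl, smul_smul, ← sum_smul, ← htr, mul_sum]
        congr 1; refine sum_congr rfl fun ν _ => sum_congr rfl fun ρ _ => by ring


theorem eq_zero_of_symmetric_of_isTwistor (hD : 2 < Fintype.card ι) (hsym : η.IsSymm)
    (hη : IsUnit η.det)
    (hcl : ∀ μ ν v, γ μ (γ ν v) + γ ν (γ μ v) = (2 * η μ ν) • v)
    {T : ι → ι → S} (hT : ∀ μ ν, T μ ν = T ν μ) (htw : ∀ μ, IsTwistor η γ (T μ)) :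
    T = 0 := by
  have hD2 : (2 : ℝ) < Fintype.card ι := by exact_mod_cast hD
  set D : ℝ := (Fintype.card ι : ℝ)
  set Ψ : ι → S := fun μ => cliffordSlash η γ (T μ)
  set Θ : S := cliffordSlash η γ Ψ
  have hTΨ : ∀ μ ν, T μ ν = (1 / D) • γ ν (Ψ μ) := fun μ ν => (congr_fun (htw μ) ν).symm
  have hΨ : ∀ μ, (D - 2) • Ψ μ = -γ μ Θ := by
    intro μ
    have h : D • Ψ μ = cliffordSlash η γ (fun ν => γ μ (Ψ ν)) := by
      have : T μ = (1 / D) • fun ν => γ μ (Ψ ν) := funext fun ν => by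
        rw [hT, hTΨ]; rfl
      simp only [Ψ, this, map_smul, smul_smul]
      rw [mul_one_div_cancel (by positivity), one_smul]
    rw [sub_smul, h, cliffordSlash_gamma_comp hη hcl]
    abel
  have hΘ : Θ = 0 := by
    have h : (D - 2) • Θ = -(D • Θ) := by
      calc (D - 2) • Θ = cliffordSlash η γ ((D - 2) • Ψ) := (map_smul _ _ _).symm
        _ = -cliffordSlash η γ (fun μ => γ μ Θ) := by
          rw [← map_neg]; congr 1; funext μ; exact hΨ μ
        _ = -(D • Θ) := by rw [cliffordSlash_gamma hsym hη hcl]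
    have h' : (2 * D - 2) • Θ = 0 := by
      rw [show 2 * D - 2 = (D - 2) + D by ring, add_smul, h, neg_add_cancel]
    exact (smul_eq_zero.mp h').resolve_left (by linarith)
  have hΨ0 : ∀ μ, Ψ μ = 0 := fun μ =>
    (smul_eq_zero.mp ((hΨ μ).trans (by rw [hΘ, map_zero, neg_zero]))).resolve_left
      (by linarith)
  funext μ ν
  rw [hTΨ, hΨ0, map_zero, smul_zero, Pi.zero_apply, Pi.zero_apply]

theorem IsTwistor.apply_eq_sum {P : (ι → ℝ) →ₗ[ℝ] S}
    (hP : IsTwistor η γ fun ν => P (Pi.single ν 1)) (x : ι → ℝ) :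
    P x = ∑ μ, x μ • γ μ ((1 / (Fintype.card ι : ℝ)) •
      cliffordSlash η γ fun ν => P (Pi.single ν 1)) := by
  conv_lhs => rw [← Finset.univ_sum_single x]
  simp only [map_sum, map_smul]
  refine sum_congr rfl fun μ _ => ?_
  rw [← twistorOperator_apply, hP, ← map_smul, ← Pi.single_smul', smul_eq_mul, mul_one]

end Algebra

theorem ContinuousLinearMap.map_fderiv_apply_eq_zero {𝕜 E F G : Type*} [NontriviallyNormedField 𝕜]
    [NormedAddCommGroup E] [NormedSpace 𝕜 E] [NormedAddCommGroup F] [NormedSpace 𝕜 F]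
    [NormedAddCommGroup G] [NormedSpace 𝕜 G] (L : F →L[𝕜] G) {f : E → F}
    (hf : ∀ y, L (f y) = 0) (x u : E) : L (fderiv 𝕜 f x u) = 0 := by
  by_cases hd : DifferentiableAt 𝕜 f x
  · have h := L.hasFDerivAt.comp x hd.hasFDerivAt
    rw [show L ∘ f = fun _ => 0 from funext hf] at h
    exact congr($(h.unique (hasFDerivAt_const 0 x)) u)
  · simp [fderiv_zero_of_not_differentiableAt hd]

theorem eq_add_fderiv_of_fderiv_fderiv_eq_zero {E F : Type*} [NormedAddCommGroup E]
    [NormedSpace ℝ E] [NormedAddCommGroup F] [NormedSpace ℝ F] {f : E → F}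
    (hf : ContDiff ℝ 2 f) (h : ∀ x, fderiv ℝ (fderiv ℝ f) x = 0) (x : E) :
    f x = f 0 + fderiv ℝ f 0 x := by
  have hdf : Differentiable ℝ f := hf.differentiable (by norm_num)
  have hddf : Differentiable ℝ (fderiv ℝ f) :=
    (hf.fderiv_right (m := 1) (by norm_num)).differentiable (by norm_num)
  have hconst : ∀ y, fderiv ℝ f y = fderiv ℝ f 0 := fun y =>
    is_const_of_fderiv_eq_zero hddf h y 0
  have := is_const_of_fderiv_eq_zero (hdf.sub (fderiv ℝ f 0).differentiable) (fun y => by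
    rw [fderiv_sub (hdf y) (fderiv ℝ f 0).differentiableAt, hconst, ContinuousLinearMap.fderiv,
      sub_self]) x 0
  rw [Pi.sub_apply, Pi.sub_apply, map_zero, sub_zero] at this
  exact sub_eq_iff_eq_add.mp this

section Analysis

variable {ι S : Type*} [Fintype ι] [DecidableEq ι] [NormedAddCommGroup S] [NormedSpace ℝ S]
  {η : Matrix ι ι ℝ} {γ : ι → S →ₗ[ℝ] S}

theorem isTwistor_iff_sub_apply_eq_zero (v : ι → S) :
    IsTwistor η γ v ↔ (LinearMap.id - twistorOperator η γ : (ι → S) →ₗ[ℝ] ι → S) v = 0 := by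
  rw [LinearMap.sub_apply, LinearMap.id_apply, sub_eq_zero, IsTwistor, eq_comm]

theorem isTwistor_fderiv_fderiv [FiniteDimensional ℝ S] {ε : (ι → ℝ) → S}
    (h : ∀ y, IsTwistor η γ fun ν => fderiv ℝ ε y (Pi.single ν 1)) (x u : ι → ℝ) :
    IsTwistor η γ fun ν => fderiv ℝ (fderiv ℝ ε) x u (Pi.single ν 1) := by
  let partials : ((ι → ℝ) →L[ℝ] S) →L[ℝ] ι → S :=
    ContinuousLinearMap.pi fun ν => ContinuousLinearMap.apply ℝ S (Pi.single ν 1)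
  let L := (LinearMap.id - twistorOperator η γ).toContinuousLinearMap ∘L partials
  have hL : ∀ y, L (fderiv ℝ ε y) = 0 := fun y => by
    simpa [L, partials, isTwistor_iff_sub_apply_eq_zero] using h y
  simpa [L, partials, isTwistor_iff_sub_apply_eq_zero] using L.map_fderiv_apply_eq_zero hL x u

theorem fderiv_fderiv_eq_zero_of_isTwistor [FiniteDimensional ℝ S] (hD : 2 < Fintype.card ι)
    (hsym : η.IsSymm) (hη : IsUnit η.det)
    (hcl : ∀ μ ν v, γ μ (γ ν v) + γ ν (γ μ v) = (2 * η μ ν) • v)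
    {ε : (ι → ℝ) → S} (hε : ContDiff ℝ 2 ε)
    (h : ∀ y, IsTwistor η γ fun ν => fderiv ℝ ε y (Pi.single ν 1)) (x : ι → ℝ) :
    fderiv ℝ (fderiv ℝ ε) x = 0 := by
  have hT := eq_zero_of_symmetric_of_isTwistor hD hsym hη hcl
    (T := fun μ ν => fderiv ℝ (fderiv ℝ ε) x (Pi.single μ 1) (Pi.single ν 1))
    (fun μ ν => hε.contDiffAt.isSymmSndFDerivAt (by simp) _ _)
    (fun μ => isTwistor_fderiv_fderiv h x _)
  refine ContinuousLinearMap.coe_injective ((Pi.basisFun ℝ ι).ext fun μ => ?_)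
  refine ContinuousLinearMap.coe_injective ((Pi.basisFun ℝ ι).ext fun ν => ?_)
  simpa using congr_fun₂ hT μ ν

end Analysis

/-- in flat space of dimension `D > 2` with nondegenerate symmetric metric
`η` and gamma matrices satisfying the Clifford relations
`γ_μ γ_ν + γ_ν γ_μ = 2 η_{μν} id`, every smooth solution of the conformal Killing spinor
(twistor) equation `∂_μ ε = (1/D) γ_μ η^{νρ} γ_ρ ∂_ν ε` is of the form
`ε(x) = ε₀ + x^μ γ_μ η₀` for constant spinors `ε₀, η₀`. -/
theorem stmt_16 (D : ℕ) (hD : 2 < D) (η : Matrix (Fin D) (Fin D) ℝ)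
    (hηsym : ∀ μ ν, η μ ν = η ν μ) (hηnd : IsUnit η.det)
    (S : Type*) [NormedAddCommGroup S] [NormedSpace ℂ S] [FiniteDimensional ℂ S]
    (γ : Fin D → S →ₗ[ℂ] S)
    (hcl : ∀ μ ν, γ μ ∘ₗ γ ν + γ ν ∘ₗ γ μ
      = ((2 * η μ ν : ℝ) : ℂ) • (LinearMap.id : S →ₗ[ℂ] S))
    (ε : (Fin D → ℝ) → S) (hε : ContDiff ℝ (⊤ : ℕ∞) ε)
    (heq : ∀ μ x, fderiv ℝ ε x (Pi.single μ 1)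
      = (1 / (D : ℝ)) • γ μ (∑ ν, ∑ ρ, η⁻¹ ν ρ • γ ρ (fderiv ℝ ε x (Pi.single ν 1)))) :
    ∃ ε₀ η₀ : S, ∀ x, ε x = ε₀ + ∑ μ, x μ • γ μ η₀ := by
  let γℝ : Fin D → S →ₗ[ℝ] S := fun μ => (γ μ).restrictScalars ℝ
  have hclℝ : ∀ μ ν v, γℝ μ (γℝ ν v) + γℝ ν (γℝ μ v) = (2 * η μ ν) • v := fun μ ν v => by
    have h := congr($(hcl μ ν) v)
    simp only [LinearMap.add_apply, LinearMap.comp_apply, LinearMap.smul_apply,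
      LinearMap.id_apply, Complex.coe_smul] at h
    exact h
  have htw : ∀ x, IsTwistor η γℝ fun ν => fderiv ℝ ε x (Pi.single ν 1) := fun x =>
    funext fun μ => by
      rw [twistorOperator_apply, cliffordSlash_apply, Fintype.card_fin]
      exact (heq μ x).symm
  have hε2 : ContDiff ℝ 2 ε := hε.of_le (WithTop.coe_le_coe.mpr le_top)
  have hhess := fderiv_fderiv_eq_zero_of_isTwistor (hD.trans_eq (Fintype.card_fin D).symm)
    (Matrix.IsSymm.ext fun μ ν => hηsym ν μ) hηnd hclℝ hε2 htw
  refine ⟨ε 0, (1 / (Fintype.card (Fin D) : ℝ)) •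
    cliffordSlash η γℝ (fun ν => fderiv ℝ ε 0 (Pi.single ν 1)), fun x => ?_⟩
  rw [eq_add_fderiv_of_fderiv_fderiv_eq_zero hε2 hhess x]
  exact congrArg _ ((htw 0).apply_eq_sum (P := (fderiv ℝ ε 0 : (Fin D → ℝ) →ₗ[ℝ] S)) x)
end
end

section
/- Let U ⊆ ℝ^{4r} be open, g a smooth field of invertible symmetric matrices on U with Levi-Civita coefficients γ_{XY}^Z, and T_{XY}^Z a smooth tensor field on U antisymmetric in X, Y (a torsion). Set Γ^+_{XY}^Z := γ_{XY}^Z + T_{XY}^Z, with covariant derivative 𝔇^+. Let J^α (α = 1,2,3) be an almost hypercomplex structure on U with vanishing diagonal Nijenhuis tensor, which is covariantly constant with respect to Γ^+: ∂_X J^α_Y^Z − Γ^+_{XY}^W J^α_W^Z + Γ^+_{XW}^Z J^α_Y^W = 0. Assume that the torsion is covariantly constant with respect to 𝔇^+ and traceless (Σ_Z T_{XZ}^Z = 0). Then the antisymmetric part of the Ricci tensor of the Obata connection Γ^{Ob} of J, namely R_{[XY]} := (1/2)(R_{XY} − R_{YX}) with R_{XY} := Σ_Z R^{Ob}_{ZXY}^Z,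 is given by R_{[XY]} = (2/3) Σ_Z T_{XY}^Z V_Z, where V_Z := Σ_{α,W,V,U} J^α_Z^W T_{WV}^U J^α_U^V. (This is the formula from which the non-vanishing antisymmetric Ricci tensor of hypercomplex group manifolds is computed.) -/
noncomputable section

/-- The Levi-Civita (Christoffel) coefficients
`γ_{XY}^Z = (1/2) g^{ZV} (∂_X g_{YV} + ∂_Y g_{XV} − ∂_V g_{XY})` of a metric field `g`. -/
def christoffel {n : ℕ} (g : (Fin n → ℝ) → Matrix (Fin n) (Fin n) ℝ)
    (X Y Z : Fin n) (x : Fin n → ℝ) : ℝ :=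
  (1 / 2) * ∑ V, (g x)⁻¹ Z V *
    (pd X (fun y => g y Y V) x + pd Y (fun y => g y X V) x - pd V (fun y => g y X Y) x)

/-- The curvature
`R_{XYZ}^W = ∂_X Γ_{YZ}^W − ∂_Y Γ_{XZ}^W + Γ_{XV}^W Γ_{YZ}^V − Γ_{YV}^W Γ_{XZ}^V`
of connection coefficients `Γ`. -/
def curvOf {n : ℕ} (Γ : Fin n → Fin n → Fin n → (Fin n → ℝ) → ℝ)
    (X Y Z W : Fin n) (x : Fin n → ℝ) : ℝ :=
  pd X (Γ Y Z W) x - pd Y (Γ X Z W) x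
    + ∑ V, Γ X V W x * Γ Y Z V x - ∑ V, Γ Y V W x * Γ X Z V x

/-- The Ricci tensor `R_{XY} = Σ_Z R_{ZXY}^Z` of the Obata connection of `J`. -/
def obataRicci {n : ℕ} (J : Fin 3 → Fin n → Fin n → (Fin n → ℝ) → ℝ)
    (X Y : Fin n) (x : Fin n → ℝ) : ℝ :=
  ∑ Z, curvOf (fun A B C => obata J A B C) Z X Y Z x

/-!
The Obata connection is symmetric, so in the antisymmetric part of its Ricci tensor only the
derivatives of its trace `θ_X = Γ^{Ob}_{XZ}^Z` survive: `R_{XY} - R_{YX} = ∂_Y θ_X - ∂_X θ_Y`.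
Since `J` is parallel for `Γ⁺ = γ + T`, every derivative of `J` in the Obata formula is a
commutator `[Γ⁺_A, J]`, and the quaternion relations evaluate the trace to
`θ_X = γ_{XZ}^Z - (2/3) V_X` (`T` being traceless). The Levi-Civita trace
`γ_{XZ}^Z = ½ tr (g⁻¹ ∂_X g)` is closed, while `V`, a full contraction of the `Γ⁺`-parallel
tensors `J` and `T`, is itself parallel: `∂_Y V_X = Γ⁺_{YX}^W V_W`. As
`Γ⁺_{YX}^W - Γ⁺_{XY}^W = -2 T_{XY}^W`, this gives `R_{[XY]} = (2/3) T_{XY}^Z V_Z`.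
-/

open Filter Topology Matrix
open scoped ContDiff

section PartialDerivative

variable {n : ℕ} {x : Fin n → ℝ} {f g : (Fin n → ℝ) → ℝ}

theorem pd_sub (hf : DifferentiableAt ℝ f x) (hg : DifferentiableAt ℝ g x) (i : Fin n) :
    pd i (fun y => f y - g y) x = pd i f x - pd i g x := by
  simp [pd, fderiv_fun_sub hf hg]

theorem pd_mul (hf : DifferentiableAt ℝ f x) (hg : DifferentiableAt ℝ g x) (i : Fin n) :
    pd i (fun y => f y * g y) x = pd i f x * g x + f x * pd i g x := by
  simp only [pd, fderiv_fun_mul hf hg, _root_.add_apply, _root_.smul_apply, smul_eq_mul]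
  ring

theorem pd_const_mul (c : ℝ) (i : Fin n) : pd i (fun y => c * f y) x = c * pd i f x := by
  rw [pd, show (fun y => c * f y) = c • f from rfl, fderiv_const_smul_field]
  rfl

theorem pd_sum {ι : Type*} {s : Finset ι} {F : ι → (Fin n → ℝ) → ℝ}
    (hF : ∀ j ∈ s, DifferentiableAt ℝ (F j) x) (i : Fin n) :
    pd i (fun y => ∑ j ∈ s, F j y) x = ∑ j ∈ s, pd i (F j) x := by
  simp [pd, fderiv_fun_sum hF]

theorem pd_congr_of_eventuallyEq (h : f =ᶠ[𝓝 x] g) (i : Fin n) : pd i f x = pd i g x := by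
  rw [pd, pd, h.fderiv_eq]

theorem pd_comm (hf : ContDiffAt ℝ 2 f x) (i j : Fin n) : pd i (pd j f) x = pd j (pd i f) x := by
  have hd : DifferentiableAt ℝ (fderiv ℝ f) x :=
    (hf.fderiv_right (m := 1) le_rfl).differentiableAt one_ne_zero
  have hsecond : ∀ a b : Fin n,
      pd a (pd b f) x = fderiv ℝ (fderiv ℝ f) x (Pi.single a 1) (Pi.single b 1) := by
    intro a b
    change fderiv ℝ (fun y => fderiv ℝ f y (Pi.single b 1)) x (Pi.single a 1) = _
    simp [fderiv_clm_apply hd (differentiableAt_const _)]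
  rw [hsecond, hsecond, hf.isSymmSndFDerivAt (by simp)]

theorem ContDiffOn.pd {U : Set (Fin n → ℝ)} (hf : ContDiffOn ℝ ∞ f U) (hU : IsOpen U)
    (i : Fin n) : ContDiffOn ℝ ∞ (pd i f) U :=
  (hf.fderiv_of_isOpen hU le_rfl).clm_apply contDiffOn_const

end PartialDerivative

section SmoothEntries

variable {E : Type*} [NormedAddCommGroup E] [NormedSpace ℝ E] {U : Set E}
  {ι : Type*} [Fintype ι] [DecidableEq ι] {M : E → Matrix ι ι ℝ}

theorem contDiffOn_det (hM : ∀ a b, ContDiffOn ℝ ∞ (fun y => M y a b) U) :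
    ContDiffOn ℝ ∞ (fun y => (M y).det) U := by
  simp only [det_apply']
  exact ContDiffOn.sum fun σ _ => contDiffOn_const.mul (contDiffOn_prod fun i _ => hM _ _)

theorem contDiffOn_inv_apply (hM : ∀ a b, ContDiffOn ℝ ∞ (fun y => M y a b) U)
    (hdet : ∀ y ∈ U, IsUnit (M y).det) (a b : ι) :
    ContDiffOn ℝ ∞ (fun y => (M y)⁻¹ a b) U := by
  have hadj : ContDiffOn ℝ ∞ (fun y => (M y).adjugate a b) U := by
    simp only [adjugate_apply]
    refine contDiffOn_det fun i j => ?_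
    simp only [updateRow_apply]
    split_ifs
    exacts [contDiffOn_const, hM i j]
  simp only [inv_def, Ring.inverse_eq_inv', Matrix.smul_apply, smul_eq_mul]
  exact ((contDiffOn_det hM).inv fun y hy => (hdet y hy).ne_zero).mul hadj

end SmoothEntries

section MatrixDerivative

variable {n : ℕ} {x : Fin n → ℝ} {ι κ ν : Type*}

def pdMatrix (i : Fin n) (M : (Fin n → ℝ) → Matrix ι κ ℝ) (x : Fin n → ℝ) : Matrix ι κ ℝ :=
  of fun a b => pd i (fun y => M y a b) x

@[simp] theorem pdMatrix_apply (i : Fin n) (M : (Fin n → ℝ) → Matrix ι κ ℝ) (a : ι) (b : κ) :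
    pdMatrix i M x a b = pd i (fun y => M y a b) x := rfl

theorem pdMatrix_congr_of_eventuallyEq {M N : (Fin n → ℝ) → Matrix ι κ ℝ} (h : M =ᶠ[𝓝 x] N)
    (i : Fin n) : pdMatrix i M x = pdMatrix i N x := by
  ext a b
  exact pd_congr_of_eventuallyEq (h.mono fun y hy => by rw [hy]) i

theorem pdMatrix_mul [Fintype κ] {M : (Fin n → ℝ) → Matrix ι κ ℝ} {N : (Fin n → ℝ) → Matrix κ ν ℝ}
    (hM : ∀ a b, DifferentiableAt ℝ (fun y => M y a b) x)
    (hN : ∀ a b, DifferentiableAt ℝ (fun y => N y a b) x) (i : Fin n) :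
    pdMatrix i (fun y => M y * N y) x = pdMatrix i M x * N x + M x * pdMatrix i N x := by
  ext a b
  simp only [pdMatrix_apply, mul_apply, Matrix.add_apply]
  rw [pd_sum fun j _ => (hM a j).fun_mul (hN j b)]
  simp only [pd_mul (hM _ _) (hN _ _), Finset.sum_add_distrib]

theorem pd_trace [Fintype ι] {M : (Fin n → ℝ) → Matrix ι ι ℝ}
    (hM : ∀ a b, DifferentiableAt ℝ (fun y => M y a b) x) (i : Fin n) :
    pd i (fun y => trace (M y)) x = trace (pdMatrix i M x) :=
  pd_sum (fun a _ => hM a a) i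

theorem pdMatrix_inv [Fintype ι] [DecidableEq ι] {g : (Fin n → ℝ) → Matrix ι ι ℝ}
    (hg : ∀ a b, DifferentiableAt ℝ (fun y => g y a b) x)
    (hginv : ∀ a b, DifferentiableAt ℝ (fun y => (g y)⁻¹ a b) x)
    (hdet : ∀ᶠ y in 𝓝 x, IsUnit (g y).det) (i : Fin n) :
    pdMatrix i (fun y => (g y)⁻¹) x = -((g x)⁻¹ * pdMatrix i g x * (g x)⁻¹) := by
  have h0 : pdMatrix i (fun y => (g y)⁻¹ * g y) x = 0 := by
    rw [pdMatrix_congr_of_eventuallyEq (hdet.mono fun y hy => nonsing_inv_mul _ hy)]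
    ext a b
    simp [pd]
  rw [pdMatrix_mul hginv hg, add_eq_zero_iff_eq_neg] at h0
  calc pdMatrix i (fun y => (g y)⁻¹) x
      = pdMatrix i (fun y => (g y)⁻¹) x * g x * (g x)⁻¹ := by
        rw [Matrix.mul_assoc, mul_nonsing_inv _ hdet.self_of_nhds, Matrix.mul_one]
    _ = _ := by rw [h0, neg_mul]

end MatrixDerivative

section LeviCivita

variable {n : ℕ} {U : Set (Fin n → ℝ)} {g : (Fin n → ℝ) → Matrix (Fin n) (Fin n) ℝ}
  {x : Fin n → ℝ}

theorem christoffel_comm (hU : IsOpen U) (hgsym : ∀ y ∈ U, (g y).IsSymm) (hx : x ∈ U)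
    (A B C : Fin n) : christoffel g A B C x = christoffel g B A C x := by
  have hAB : ∀ V, pd V (fun y => g y A B) x = pd V (fun y => g y B A) x :=
    pd_congr_of_eventuallyEq (eventually_of_mem (hU.mem_nhds hx) fun y hy =>
      (hgsym y hy).apply B A)
  simp only [christoffel, hAB, add_comm (pd A _ x)]

theorem contDiffOn_christoffel (hU : IsOpen U)
    (hgs : ∀ a b, ContDiffOn ℝ ∞ (fun y => g y a b) U) (hdet : ∀ y ∈ U, IsUnit (g y).det)
    (A B C : Fin n) : ContDiffOn ℝ ∞ (christoffel g A B C) U :=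
  contDiffOn_const.mul <| ContDiffOn.sum fun V _ => (contDiffOn_inv_apply hgs hdet C V).mul
    ((((hgs B V).pd hU A).add ((hgs A V).pd hU B)).sub ((hgs A B).pd hU V))

theorem sum_christoffel_self (hg : (g x).IsSymm) (X : Fin n) :
    ∑ Z, christoffel g X Z Z x = (1 / 2) * trace ((g x)⁻¹ * pdMatrix X g x) := by
  have hG : ∀ a b, (g x)⁻¹ a b = (g x)⁻¹ b a := fun a b => hg.inv.apply b a
  have hcancel : ∑ Z, ∑ V, (g x)⁻¹ Z V * pd Z (fun y => g y X V) x
      = ∑ Z, ∑ V, (g x)⁻¹ Z V * pd V (fun y => g y X Z) x := by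
    rw [Finset.sum_comm]
    simp only [hG]
  simp only [christoffel, ← Finset.mul_sum, mul_add, mul_sub, Finset.sum_add_distrib,
    Finset.sum_sub_distrib, hcancel, add_sub_cancel_right, trace, diag, mul_apply, pdMatrix_apply]
  congr 1
  rw [Finset.sum_comm]
  simp only [hG]

/-- `∂_Y (½ tr (g⁻¹ ∂_X g)) = ½ tr (g⁻¹ ∂_Y ∂_X g) - ½ tr (g⁻¹ ∂_Y g g⁻¹ ∂_X g)` is symmetric
in `X, Y`. -/
theorem pd_sum_christoffel_self_comm (hU : IsOpen U)
    (hgs : ∀ a b, ContDiffOn ℝ ∞ (fun y => g y a b) U) (hgsym : ∀ y ∈ U, (g y).IsSymm)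
    (hdet : ∀ y ∈ U, IsUnit (g y).det) (hx : x ∈ U) (X Y : Fin n) :
    pd Y (fun y => ∑ Z, christoffel g X Z Z y) x
      = pd X (fun y => ∑ Z, christoffel g Y Z Z y) x := by
  have hxU := hU.mem_nhds hx
  have hg2 : ∀ a b, ContDiffAt ℝ 2 (fun y => g y a b) x :=
    fun a b => ((hgs a b).contDiffAt hxU).of_le (WithTop.coe_le_coe.mpr le_top)
  have hgd : ∀ a b, DifferentiableAt ℝ (fun y => g y a b) x :=
    fun a b => (hg2 a b).differentiableAt two_ne_zero
  have hGd : ∀ a b, DifferentiableAt ℝ (fun y => (g y)⁻¹ a b) x := fun a b =>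
    ((contDiffOn_inv_apply hgs hdet a b).contDiffAt hxU).differentiableAt (by simp)
  have hdgd : ∀ A a b, DifferentiableAt ℝ (fun y => pdMatrix A g y a b) x := fun A a b =>
    (((hgs a b).pd hU A).contDiffAt hxU).differentiableAt (by simp)
  have hpd : ∀ X Y, pd Y (fun y => ∑ Z, christoffel g X Z Z y) x = (1 / 2) *
      (-trace ((g x)⁻¹ * pdMatrix Y g x * (g x)⁻¹ * pdMatrix X g x)
        + trace ((g x)⁻¹ * pdMatrix Y (pdMatrix X g) x)) := by
    intro X Y
    have hprod : ∀ a b, DifferentiableAt ℝ (fun y => ((g y)⁻¹ * pdMatrix X g y) a b) x := by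
      simp only [mul_apply]
      exact fun a b => DifferentiableAt.fun_sum fun j _ => (hGd a j).fun_mul (hdgd X j b)
    rw [pd_congr_of_eventuallyEq (eventually_of_mem hxU fun y hy =>
        sum_christoffel_self (hgsym y hy) X), pd_const_mul, pd_trace hprod,
      pdMatrix_mul hGd (hdgd X), pdMatrix_inv hgd hGd (eventually_of_mem hxU hdet), trace_add,
      neg_mul, trace_neg]
  have hcomm : pdMatrix Y (pdMatrix X g) x = pdMatrix X (pdMatrix Y g) x := by
    ext a b
    exact pd_comm (hg2 a b) Y X
  rw [hpd, hpd, hcomm, Matrix.mul_assoc ((g x)⁻¹ * pdMatrix Y g x), trace_mul_comm,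
    ← Matrix.mul_assoc]

end LeviCivita

namespace Matrix

variable {ι : Type*}

def sliceAt (S : ι → Matrix ι ι ℝ) (X : ι) : Matrix ι ι ℝ := of fun u W => S u X W

@[simp] theorem sliceAt_apply (S : ι → Matrix ι ι ℝ) (X u W : ι) : sliceAt S X u W = S u X W :=
  rfl

variable [Fintype ι]

theorem trace_commutator_mul (S M N : Matrix ι ι ℝ) :
    trace ((S * M - M * S) * N) = trace (S * (M * N - N * M)) := by
  simp only [sub_mul, mul_sub, trace_sub, Matrix.mul_assoc, trace_mul_comm M (S * N)]

theorem trace_sum_smul_add_commutator_mul (S J : Matrix ι ι ℝ) (T : ι → Matrix ι ι ℝ) (W : ι) :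
    trace ((∑ V, S W V • T V + (S * T W - T W * S)) * J) + trace (T W * (S * J - J * S))
      = ∑ V, S W V * trace (T V * J) := by
  simp only [add_mul, sub_mul, mul_sub, Finset.sum_mul, trace_add, trace_sub, trace_sum,
    smul_mul_assoc, trace_smul, smul_eq_mul, Matrix.mul_assoc, trace_mul_comm S (T W * J)]
  ring

theorem commutator_mulVec_add_mulVec_mulVec (S J : Matrix ι ι ℝ) (f : ι → ℝ) :
    (S * J - J * S) *ᵥ f + J *ᵥ (S *ᵥ f) = S *ᵥ (J *ᵥ f) := by
  simp only [sub_mulVec, mulVec_mulVec, sub_add_cancel]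

variable [DecidableEq ι]

def IsQuaternionicTriple (J : Fin 3 → Matrix ι ι ℝ) : Prop :=
  ∀ α β, J α * J β = (if α = β then -1 else 0) + ∑ γ, epsLC α β γ • J γ

namespace IsQuaternionicTriple

variable {J : Fin 3 → Matrix ι ι ℝ} (hJ : IsQuaternionicTriple J)
include hJ

theorem mul_self (α : Fin 3) : J α * J α = -1 := by
  rw [hJ]
  fin_cases α <;> simp [epsLC]

theorem sum_eps_smul_mul (γ : Fin 3) :
    ∑ α, ∑ β, epsLC α β γ • (J α * J β) = (2 : ℝ) • J γ := by
  simp only [hJ _ _]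
  fin_cases γ <;> simp [Fin.sum_univ_three, epsLC] <;> module

theorem sum_eps_smul_commutator (β : Fin 3) :
    ∑ α, ∑ γ, epsLC α β γ • (J γ * J α - J α * J γ) = (4 : ℝ) • J β := by
  simp only [hJ _ _]
  fin_cases β <;> simp [Fin.sum_univ_three, epsLC] <;> module

theorem sum_eps_mul_trace_mul_mul (M : Fin 3 → Matrix ι ι ℝ) :
    ∑ α, ∑ β, ∑ γ, epsLC α β γ * trace (J β * M γ * J α) = 2 * ∑ γ, trace (M γ * J γ) := by
  calc _ = ∑ γ, ∑ α, ∑ β, epsLC α β γ * trace (J β * M γ * J α) :=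
        (Finset.sum_congr rfl fun α _ => Finset.sum_comm).trans Finset.sum_comm
    _ = ∑ γ, ∑ α, ∑ β, epsLC α β γ * trace (M γ * (J α * J β)) := by
        refine Finset.sum_congr rfl fun γ _ => Finset.sum_congr rfl fun α _ =>
          Finset.sum_congr rfl fun β _ => ?_
        rw [trace_mul_cycle, trace_mul_comm]
    _ = ∑ γ, trace (M γ * ∑ α, ∑ β, epsLC α β γ • (J α * J β)) := by
        simp only [Matrix.mul_sum, trace_sum, Matrix.mul_smul, trace_smul, smul_eq_mul]
    _ = _ := by
        simp only [hJ.sum_eps_smul_mul, Matrix.mul_smul, trace_smul, smul_eq_mul, Finset.mul_sum]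

variable (S : ι → Matrix ι ι ℝ) (X : ι)

theorem sum_eps_mul_trace_commutator_mul :
    ∑ α, ∑ β, ∑ γ, epsLC α β γ * ∑ u, J β X u * trace ((S u * J γ - J γ * S u) * J α)
      = 4 * ∑ β, ∑ u, J β X u * trace (S u * J β) := by
  calc _ = ∑ α, ∑ β, ∑ γ, ∑ u,
            J β X u * (epsLC α β γ * trace (S u * (J γ * J α - J α * J γ))) := by
        simp only [trace_commutator_mul, Finset.mul_sum]
        exact Finset.sum_congr rfl fun α _ => Finset.sum_congr rfl fun β _ =>
          Finset.sum_congr rfl fun γ _ => Finset.sum_congr rfl fun u _ => by ring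
    _ = ∑ β, ∑ u, ∑ α, ∑ γ,
            J β X u * (epsLC α β γ * trace (S u * (J γ * J α - J α * J γ))) :=
        Finset.sum_comm.trans <| Finset.sum_congr rfl fun β _ =>
          (Finset.sum_congr rfl fun α _ => Finset.sum_comm).trans Finset.sum_comm
    _ = ∑ β, ∑ u, J β X u * trace (S u * ∑ α, ∑ γ, epsLC α β γ • (J γ * J α - J α * J γ)) := by
        simp only [trace_sum, Matrix.mul_smul, trace_smul, smul_eq_mul, Finset.mul_sum]
    _ = _ := by
        simp only [hJ.sum_eps_smul_commutator, Matrix.mul_smul, trace_smul, smul_eq_mul,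
          Finset.mul_sum]
        exact Finset.sum_congr rfl fun β _ => Finset.sum_congr rfl fun u _ => by ring

/-- The Obata trace `Γ^{Ob}_{XZ}^Z` when `∂_A J = [S_A, J]`, in matrix form: the four summands
of the Obata formula give the traces `h₁, …, h₄`. -/
theorem sum_trace_obataKernel_mul :
    ∑ α, trace (((S X * J α - J α * S X)
        + (sliceAt S X * J α - sliceAt (fun u => J α * S u) X)
        + (1 / 2 : ℝ) • ∑ β, ∑ γ, epsLC α β γ • (∑ u, J β X u • (S u * J γ - J γ * S u)
          + J β * (sliceAt S X * J γ - sliceAt (fun u => J γ * S u) X))) * J α)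
      = -6 * trace (sliceAt S X) - 2 * ∑ α, trace (sliceAt (fun u => J α * S u) X * J α)
        + 2 * ∑ β, ∑ u, J β X u * trace (S u * J β) := by
  set A := sliceAt S X
  set B : Fin 3 → Matrix ι ι ℝ := fun γ => sliceAt (fun u => J γ * S u) X
  simp only [add_mul, Finset.sum_mul, smul_mul_assoc, trace_add, trace_sum, trace_smul,
    smul_eq_mul, Finset.sum_add_distrib, Finset.mul_sum]
  simp only [mul_add, Finset.sum_add_distrib, ← Finset.mul_sum]
  have h₁ : ∑ α, trace ((S X * J α - J α * S X) * J α) = 0 := by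
    simp [sub_mul, Matrix.mul_assoc, trace_mul_comm (J _) (S X * J _)]
  have h₂ : ∑ α, trace ((A * J α - B α) * J α) = -3 * trace A - ∑ α, trace (B α * J α) := by
    simp [sub_mul, Matrix.mul_assoc, hJ.mul_self, Fin.sum_univ_three]
  have h₄ : ∑ α, ∑ β, ∑ γ, epsLC α β γ * trace (J β * (A * J γ - B γ) * J α)
      = -6 * trace A - 2 * ∑ γ, trace (B γ * J γ) := by
    rw [hJ.sum_eps_mul_trace_mul_mul, h₂]
    ring
  rw [h₁, h₂, hJ.sum_eps_mul_trace_commutator_mul, h₄]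
  ring

theorem sum_obataKernel :
    ∑ Z, -(1 / 6 : ℝ) * ∑ α, ∑ W, (((S X * J α - J α * S X) Z W + (S Z * J α - J α * S Z) X W
      + (1 / 2) * ∑ β, ∑ γ, epsLC α β γ * ((∑ u, J β X u * (S u * J γ - J γ * S u) Z W)
        + ∑ u, J β Z u * (S u * J γ - J γ * S u) X W)) * J α W Z)
    = ∑ Z, S Z X Z + (1 / 3) * ∑ α, ∑ u, ∑ z, ∑ v, J α X u * (S z u v - S u z v) * J α v z := by
  have hker : ∀ α, ∑ Z, ∑ W, ((S X * J α - J α * S X) Z W + (S Z * J α - J α * S Z) X W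
      + (1 / 2) * ∑ β, ∑ γ, epsLC α β γ * ((∑ u, J β X u * (S u * J γ - J γ * S u) Z W)
        + ∑ u, J β Z u * (S u * J γ - J γ * S u) X W)) * J α W Z
      = trace (((S X * J α - J α * S X)
        + (sliceAt S X * J α - sliceAt (fun u => J α * S u) X)
        + (1 / 2 : ℝ) • ∑ β, ∑ γ, epsLC α β γ • (∑ u, J β X u • (S u * J γ - J γ * S u)
          + J β * (sliceAt S X * J γ - sliceAt (fun u => J γ * S u) X))) * J α) := by
    intro α
    simp only [trace, diag, mul_apply, Matrix.add_apply, Matrix.sub_apply, Matrix.smul_apply,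
      Matrix.sum_apply, sliceAt_apply, smul_eq_mul]
  have hC : ∑ α, ∑ u, ∑ z, ∑ v, J α X u * (S z u v - S u z v) * J α v z
      = ∑ α, trace (sliceAt (fun u => J α * S u) X * J α)
        - ∑ β, ∑ u, J β X u * trace (S u * J β) := by
    rw [← Finset.sum_sub_distrib]
    refine Finset.sum_congr rfl fun α _ => ?_
    simp only [trace, diag, mul_apply, sliceAt_apply, mul_sub, sub_mul, Finset.sum_sub_distrib,
      Finset.mul_sum, Finset.sum_mul]
    congr 1
    · refine (Finset.sum_comm.trans (Finset.sum_congr rfl fun z _ => Finset.sum_comm)).trans ?_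
      exact Finset.sum_congr rfl fun u _ => Finset.sum_congr rfl fun z _ =>
        Finset.sum_congr rfl fun v _ => by ring
    · simp only [mul_assoc]
  rw [← Finset.mul_sum, Finset.sum_comm, Finset.sum_congr rfl fun α _ => hker α,
    hJ.sum_trace_obataKernel_mul, hC]
  simp only [trace, diag, sliceAt_apply]
  ring

end IsQuaternionicTriple

end Matrix

section PointwiseMatrices

variable {n : ℕ} {x : Fin n → ℝ}

def matrixAt {κ : Type*} (F : κ → Fin n → Fin n → (Fin n → ℝ) → ℝ) (x : Fin n → ℝ) (k : κ) :
    Matrix (Fin n) (Fin n) ℝ :=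
  Matrix.of fun a b => F k a b x

@[simp] theorem matrixAt_apply {κ : Type*} (F : κ → Fin n → Fin n → (Fin n → ℝ) → ℝ)
    (x : Fin n → ℝ) (k : κ) (a b : Fin n) : matrixAt F x k a b = F k a b x :=
  rfl

theorem IsAlmostHypercomplexOn.isQuaternionicTriple_matrixAt
    {J : Fin 3 → Fin n → Fin n → (Fin n → ℝ) → ℝ} {U : Set (Fin n → ℝ)}
    (hJ : IsAlmostHypercomplexOn J U) (hx : x ∈ U) :
    Matrix.IsQuaternionicTriple (matrixAt J x) := by
  intro α β
  ext X Z
  have h := hJ.2 α β X Z x hx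
  by_cases hαβ : α = β <;>
    simpa [hαβ, Matrix.mul_apply, Matrix.sum_apply, Matrix.one_apply, neg_ite] using h

variable {Γ : Fin n → Fin n → Fin n → (Fin n → ℝ) → ℝ}

theorem pdMatrix_matrixAt_eq_commutator {κ : Type*}
    {F : κ → Fin n → Fin n → (Fin n → ℝ) → ℝ}
    (hF : ∀ k X Y Z, pd X (F k Y Z) x - (∑ W, Γ X Y W x * F k W Z x)
      + (∑ W, Γ X W Z x * F k Y W x) = 0) (A : Fin n) (k : κ) :
    pdMatrix A (fun y => matrixAt F y k) x
      = matrixAt Γ x A * matrixAt F x k - matrixAt F x k * matrixAt Γ x A := by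
  ext B C
  simp only [pdMatrix_apply, Matrix.sub_apply, Matrix.mul_apply, matrixAt_apply,
    mul_comm (F k B _ x)]
  linear_combination hF k A B C

theorem pdMatrix_matrixAt_eq_sum_smul_add_commutator
    {T : Fin n → Fin n → Fin n → (Fin n → ℝ) → ℝ}
    (hT : ∀ X Y Z W, pd X (T Y Z W) x - (∑ V, Γ X Y V x * T V Z W x)
      - (∑ V, Γ X Z V x * T Y V W x) + (∑ V, Γ X V W x * T Y Z V x) = 0) (A W : Fin n) :
    pdMatrix A (fun y => matrixAt T y W) x = ∑ V, matrixAt Γ x A W V • matrixAt T x V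
      + (matrixAt Γ x A * matrixAt T x W - matrixAt T x W * matrixAt Γ x A) := by
  ext B C
  simp only [pdMatrix_apply, Matrix.add_apply, Matrix.sub_apply, Matrix.mul_apply,
    Matrix.sum_apply, Matrix.smul_apply, smul_eq_mul, matrixAt_apply, mul_comm (T W B _ x)]
  linear_combination hT A W B C

end PointwiseMatrices

section TorsionForm

variable {n : ℕ} {x : Fin n → ℝ}

/-- The covector `V` of the theorem. -/
def torsionForm (J : Fin 3 → Fin n → Fin n → (Fin n → ℝ) → ℝ)
    (T : Fin n → Fin n → Fin n → (Fin n → ℝ) → ℝ) (Z : Fin n) (x : Fin n → ℝ) : ℝ :=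
  ∑ α, ∑ W, ∑ V, ∑ u, J α Z W x * T W V u x * J α u V x

theorem contDiffOn_torsionForm {J : Fin 3 → Fin n → Fin n → (Fin n → ℝ) → ℝ}
    {T : Fin n → Fin n → Fin n → (Fin n → ℝ) → ℝ} {U : Set (Fin n → ℝ)}
    (hJ : ∀ α a b, ContDiffOn ℝ ∞ (J α a b) U) (hT : ∀ a b c, ContDiffOn ℝ ∞ (T a b c) U)
    (Z : Fin n) : ContDiffOn ℝ ∞ (torsionForm J T Z) U := by
  unfold torsionForm
  fun_prop

variable {J : Fin 3 → Fin n → Fin n → (Fin n → ℝ) → ℝ}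
  {T : Fin n → Fin n → Fin n → (Fin n → ℝ) → ℝ} {S : Fin n → Matrix (Fin n) (Fin n) ℝ}

theorem differentiableAt_trace_matrixAt_mul (hJd : ∀ α a b, DifferentiableAt ℝ (J α a b) x)
    (hTd : ∀ a b c, DifferentiableAt ℝ (T a b c) x) (α : Fin 3) (W : Fin n) :
    DifferentiableAt ℝ (fun y => trace (matrixAt T y W * matrixAt J y α)) x := by
  simp only [trace, diag, Matrix.mul_apply, matrixAt_apply]
  fun_prop

theorem pd_trace_matrixAt_mul (hJd : ∀ α a b, DifferentiableAt ℝ (J α a b) x)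
    (hTd : ∀ a b c, DifferentiableAt ℝ (T a b c) x)
    (hJ : ∀ A α, pdMatrix A (fun y => matrixAt J y α) x
      = S A * matrixAt J x α - matrixAt J x α * S A)
    (hT : ∀ A W, pdMatrix A (fun y => matrixAt T y W) x
      = ∑ V, S A W V • matrixAt T x V + (S A * matrixAt T x W - matrixAt T x W * S A))
    (A W : Fin n) (α : Fin 3) :
    pd A (fun y => trace (matrixAt T y W * matrixAt J y α)) x
      = ∑ V, S A W V * trace (matrixAt T x V * matrixAt J x α) := by
  have hTJd : ∀ a b, DifferentiableAt ℝ (fun y => (matrixAt T y W * matrixAt J y α) a b) x := by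
    simp only [Matrix.mul_apply, matrixAt_apply]
    fun_prop
  rw [pd_trace hTJd, pdMatrix_mul (M := fun y => matrixAt T y W) (N := fun y => matrixAt J y α)
    (hTd W) (hJd α), hJ, hT, trace_add, Matrix.trace_sum_smul_add_commutator_mul]

/-- A full contraction of parallel tensors is parallel. -/
theorem pd_torsionForm (hJd : ∀ α a b, DifferentiableAt ℝ (J α a b) x)
    (hTd : ∀ a b c, DifferentiableAt ℝ (T a b c) x)
    (hJ : ∀ A α, pdMatrix A (fun y => matrixAt J y α) x
      = S A * matrixAt J x α - matrixAt J x α * S A)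
    (hT : ∀ A W, pdMatrix A (fun y => matrixAt T y W) x
      = ∑ V, S A W V • matrixAt T x V + (S A * matrixAt T x W - matrixAt T x W * S A))
    (A B : Fin n) :
    pd A (torsionForm J T B) x = ∑ W, S A B W * torsionForm J T W x := by
  have htrd := differentiableAt_trace_matrixAt_mul hJd hTd
  have hV : ∀ Z, torsionForm J T Z
      = fun y => ∑ α, ∑ W, J α Z W y * trace (matrixAt T y W * matrixAt J y α) := by
    intro Z
    funext y
    simp only [torsionForm, trace, diag, Matrix.mul_apply, matrixAt_apply, Finset.mul_sum,
      mul_assoc]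
  have hJV : ∀ α, ∑ W, (pd A (J α B W) x * trace (matrixAt T x W * matrixAt J x α)
        + J α B W x * pd A (fun y => trace (matrixAt T y W * matrixAt J y α)) x)
      = ∑ W, S A B W * ∑ V, J α W V x * trace (matrixAt T x V * matrixAt J x α) := by
    intro α
    have hJpd : ∀ W, pd A (J α B W) x = (S A * matrixAt J x α - matrixAt J x α * S A) B W :=
      fun W => congrFun (congrFun (hJ A α) B) W
    have := congrFun (Matrix.commutator_mulVec_add_mulVec_mulVec (S A) (matrixAt J x α)
      (fun W => trace (matrixAt T x W * matrixAt J x α))) B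
    rw [Finset.sum_add_distrib]
    simp only [hJpd, pd_trace_matrixAt_mul hJd hTd hJ hT]
    simpa only [Matrix.mulVec, dotProduct, Pi.add_apply, matrixAt_apply] using this
  rw [hV, pd_sum fun α _ => DifferentiableAt.fun_sum fun W _ => (hJd α B W).fun_mul (htrd α W)]
  simp only [hV]
  calc ∑ α, pd A (fun y => ∑ W, J α B W y * trace (matrixAt T y W * matrixAt J y α)) x
      = ∑ α, ∑ W, (pd A (J α B W) x * trace (matrixAt T x W * matrixAt J x α)
          + J α B W x * pd A (fun y => trace (matrixAt T y W * matrixAt J y α)) x) := by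
        refine Finset.sum_congr rfl fun α _ => ?_
        rw [pd_sum fun W _ => (hJd α B W).fun_mul (htrd α W)]
        exact Finset.sum_congr rfl fun W _ => pd_mul (hJd α B W) (htrd α W) A
    _ = ∑ α, ∑ W, S A B W * ∑ V, J α W V x * trace (matrixAt T x V * matrixAt J x α) :=
        Finset.sum_congr rfl fun α _ => hJV α
    _ = _ := by
        rw [Finset.sum_comm]
        simp only [Finset.mul_sum]

end TorsionForm

section Obata

variable {n : ℕ} {J : Fin 3 → Fin n → Fin n → (Fin n → ℝ) → ℝ}

theorem obata_comm (A B C : Fin n) : obata J A B C = obata J B A C := by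
  funext x
  simp only [obata, add_comm (pd A _ x), add_comm (∑ u, J _ A u x * _)]

theorem contDiffOn_obata {U : Set (Fin n → ℝ)} (hU : IsOpen U)
    (hJ : ∀ α a b, ContDiffOn ℝ ∞ (J α a b) U) (A B C : Fin n) :
    ContDiffOn ℝ ∞ (obata J A B C) U := by
  have hdJ : ∀ u α a b, ContDiffOn ℝ ∞ (pd u (J α a b)) U := fun u α a b => (hJ α a b).pd hU u
  unfold obata
  fun_prop

theorem sum_obata_eq {x : Fin n → ℝ} {S : Fin n → Matrix (Fin n) (Fin n) ℝ}
    (hQ : Matrix.IsQuaternionicTriple (matrixAt J x))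
    (hJ : ∀ A α, pdMatrix A (fun y => matrixAt J y α) x
      = S A * matrixAt J x α - matrixAt J x α * S A) (X : Fin n) :
    ∑ Z, obata J X Z Z x = ∑ Z, S Z X Z
      + (1 / 3) * ∑ α, ∑ u, ∑ z, ∑ v, J α X u x * (S z u v - S u z v) * J α v z x := by
  have hpd : ∀ A α B C,
      pd A (J α B C) x = (S A * matrixAt J x α - matrixAt J x α * S A) B C :=
    fun A α B C => congrFun (congrFun (hJ A α) B) C
  simp only [obata, hpd]
  exact hQ.sum_obataKernel S X

theorem sum_obata_eq_sub_torsionForm {x : Fin n → ℝ}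
    {γ T : Fin n → Fin n → Fin n → (Fin n → ℝ) → ℝ}
    (hQ : Matrix.IsQuaternionicTriple (matrixAt J x)) (hγ : ∀ A B C, γ A B C x = γ B A C x)
    (hT : ∀ A B C, T A B C x = -T B A C x) (htr : ∀ A, ∑ Z, T A Z Z x = 0)
    (hJ : ∀ α X Y Z, pd X (J α Y Z) x - (∑ W, (γ X Y W x + T X Y W x) * J α W Z x)
      + (∑ W, (γ X W Z x + T X W Z x) * J α Y W x) = 0) (X : Fin n) :
    ∑ Z, obata J X Z Z x = ∑ Z, γ X Z Z x - (2 / 3) * torsionForm J T X x := by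
  rw [sum_obata_eq hQ
    (pdMatrix_matrixAt_eq_commutator (Γ := fun A B C y => γ A B C y + T A B C y) hJ)]
  have hS : ∑ Z, matrixAt (fun A B C y => γ A B C y + T A B C y) x Z X Z = ∑ Z, γ X Z Z x := by
    simp only [matrixAt_apply, Finset.sum_add_distrib, hγ _ X, hT _ X, Finset.sum_neg_distrib,
      htr, neg_zero, add_zero]
  have hV : ∑ α, ∑ u, ∑ z, ∑ v, J α X u x * (matrixAt (fun A B C y => γ A B C y + T A B C y) x z u v
      - matrixAt (fun A B C y => γ A B C y + T A B C y) x u z v) * J α v z x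
      = -2 * torsionForm J T X x := by
    simp only [torsionForm, Finset.mul_sum]
    refine Finset.sum_congr rfl fun α _ => Finset.sum_congr rfl fun u _ =>
      Finset.sum_congr rfl fun z _ => Finset.sum_congr rfl fun v _ => ?_
    rw [matrixAt_apply, matrixAt_apply, hγ z u, hT z u]
    ring
  rw [hS, hV]
  ring

end Obata

section Curvature

variable {n : ℕ} {x : Fin n → ℝ}

/-- The quadratic terms and `∂_Z Γ_{XY}^Z` of `R_{XY}` are symmetric in `X, Y` because `Γ` is. -/
theorem sum_curvOf_sub_sum_curvOf {Γ : Fin n → Fin n → Fin n → (Fin n → ℝ) → ℝ}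
    (hΓ : ∀ A B C, Γ A B C = Γ B A C) (hd : ∀ A B C, DifferentiableAt ℝ (Γ A B C) x)
    (X Y : Fin n) :
    ∑ Z, curvOf Γ Z X Y Z x - ∑ Z, curvOf Γ Z Y X Z x
      = pd Y (fun y => ∑ Z, Γ X Z Z y) x - pd X (fun y => ∑ Z, Γ Y Z Z y) x := by
  have htrace : ∀ X Y, ∑ Z, pd X (Γ Z Y Z) x = pd X (fun y => ∑ Z, Γ Y Z Z y) x := by
    intro X Y
    rw [pd_sum fun Z _ => hd Y Z Z]
    exact Finset.sum_congr rfl fun Z _ => by rw [hΓ Z Y]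
  have hquad : ∑ Z, ∑ V, Γ X V Z x * Γ Z Y V x = ∑ Z, ∑ V, Γ Y V Z x * Γ Z X V x := by
    rw [Finset.sum_comm]
    exact Finset.sum_congr rfl fun Z _ => Finset.sum_congr rfl fun V _ => by
      rw [hΓ X Z, hΓ V Y, mul_comm]
  simp only [curvOf, Finset.sum_add_distrib, Finset.sum_sub_distrib, htrace, hquad, hΓ X Y]
  ring

end Curvature

theorem stmt_19_general (r : ℕ) (U : Set (Fin (4 * r) → ℝ)) (hU : IsOpen U)
    (g : (Fin (4 * r) → ℝ) → Matrix (Fin (4 * r)) (Fin (4 * r)) ℝ)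
    (hgsmooth : ∀ X Y, ContDiffOn ℝ (⊤ : ℕ∞) (fun y => g y X Y) U)
    (hgsym : ∀ X Y, ∀ x ∈ U, g x X Y = g x Y X)
    (hginv : ∀ x ∈ U, IsUnit (g x).det)
    (T : Fin (4 * r) → Fin (4 * r) → Fin (4 * r) → (Fin (4 * r) → ℝ) → ℝ)
    (hTsmooth : ∀ X Y Z, ContDiffOn ℝ (⊤ : ℕ∞) (T X Y Z) U)
    (hTanti : ∀ X Y Z, ∀ x ∈ U, T X Y Z x = - T Y X Z x)
    (J : Fin 3 → Fin (4 * r) → Fin (4 * r) → (Fin (4 * r) → ℝ) → ℝ)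
    (hJ : IsAlmostHypercomplexOn J U)
    -- `J` is covariantly constant with respect to `Γ⁺ = γ + T`:
    (hJcov : ∀ α X Y Z, ∀ x ∈ U,
      pd X (J α Y Z) x
        - (∑ W, (christoffel g X Y W x + T X Y W x) * J α W Z x)
        + (∑ W, (christoffel g X W Z x + T X W Z x) * J α Y W x) = 0)
    -- the torsion is covariantly constant with respect to `𝔇⁺`:
    (hTcov : ∀ X Y Z W, ∀ x ∈ U,
      pd X (T Y Z W) x
        - (∑ V, (christoffel g X Y V x + T X Y V x) * T V Z W x)
        - (∑ V, (christoffel g X Z V x + T X Z V x) * T Y V W x)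
        + (∑ V, (christoffel g X V W x + T X V W x) * T Y Z V x) = 0)
    -- the torsion is traceless:
    (hTtrace : ∀ X, ∀ x ∈ U, ∑ Z, T X Z Z x = 0) :
    ∀ X Y, ∀ x ∈ U,
      (1 / 2) * (obataRicci J X Y x - obataRicci J Y X x)
        = (2 / 3) * ∑ Z, T X Y Z x *
            (∑ α, ∑ W, ∑ V, ∑ u, J α Z W x * T W V u x * J α u V x) := by
  intro X Y x hx
  have hxU := hU.mem_nhds hx
  have hd : ∀ {f : (Fin (4 * r) → ℝ) → ℝ}, ContDiffOn ℝ ∞ f U → DifferentiableAt ℝ f x :=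
    fun hf => (hf.contDiffAt hxU).differentiableAt (by simp)
  have hgsym' : ∀ y ∈ U, (g y).IsSymm := fun y hy => Matrix.IsSymm.ext fun i j => hgsym j i y hy
  have hV : ∀ A B, pd A (torsionForm J T B) x
      = ∑ W, (christoffel g A B W x + T A B W x) * torsionForm J T W x :=
    pd_torsionForm (S := matrixAt (fun A B C y => christoffel g A B C y + T A B C y) x)
      (fun α a b => hd (hJ.1 α a b)) (fun a b c => hd (hTsmooth a b c))
      (pdMatrix_matrixAt_eq_commutator (hJcov · · · · x hx))
      (pdMatrix_matrixAt_eq_sum_smul_add_commutator (hTcov · · · · x hx))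
  have hpd : ∀ X' Y', pd Y' (fun y => ∑ Z, obata J X' Z Z y) x
      = pd Y' (fun y => ∑ Z, christoffel g X' Z Z y) x
        - (2 / 3) * pd Y' (torsionForm J T X') x := by
    intro X' Y'
    rw [pd_congr_of_eventuallyEq (eventually_of_mem hxU fun y hy =>
        sum_obata_eq_sub_torsionForm (hJ.isQuaternionicTriple_matrixAt hy)
          (christoffel_comm hU hgsym' hy) (hTanti · · · y hy) (hTtrace · y hy)
          (hJcov · · · · y hy) X'),
      pd_sub (hd (ContDiffOn.sum fun Z _ => contDiffOn_christoffel hU hgsmooth hginv X' Z Z))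
        ((hd (contDiffOn_torsionForm hJ.1 hTsmooth X')).const_mul _), pd_const_mul]
  rw [obataRicci, obataRicci,
    sum_curvOf_sub_sum_curvOf obata_comm fun A B C => hd (contDiffOn_obata hU hJ.1 A B C),
    hpd, hpd, hV, hV, pd_sum_christoffel_self_comm hU hgsmooth hgsym' hginv hx]
  have hskew : ∑ W, (christoffel g Y X W x + T Y X W x) * torsionForm J T W x
      - ∑ W, (christoffel g X Y W x + T X Y W x) * torsionForm J T W x
      = -2 * ∑ Z, T X Y Z x * torsionForm J T Z x := by
    rw [← Finset.sum_sub_distrib, Finset.mul_sum]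
    refine Finset.sum_congr rfl fun W _ => ?_
    rw [christoffel_comm hU hgsym' hx Y X, hTanti Y X W x hx]
    ring
  change _ = 2 / 3 * ∑ Z, T X Y Z x * torsionForm J T Z x
  linear_combination (-1 / 3 : ℝ) * hskew

/-- for a hypercomplex structure `J` (vanishing Nijenhuis tensor) on an
open `U ⊆ ℝ^{4r}` which is covariantly constant with respect to the torsionful connection
`Γ^+ = γ + T` of a metric `g`, with `T` antisymmetric, `𝔇^+`-covariantly constant and
traceless, the antisymmetric part of the Ricci tensor of the Obata connection is
`R_{[XY]} = (2/3) T_{XY}^Z V_Z` with `V_Z = Σ J^α_Z^W T_{WV}^U J^α_U^V`. -/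
theorem stmt_19 (r : ℕ) (U : Set (Fin (4 * r) → ℝ)) (hU : IsOpen U)
    (g : (Fin (4 * r) → ℝ) → Matrix (Fin (4 * r)) (Fin (4 * r)) ℝ)
    (hgsmooth : ∀ X Y, ContDiffOn ℝ (⊤ : ℕ∞) (fun y => g y X Y) U)
    (hgsym : ∀ X Y, ∀ x ∈ U, g x X Y = g x Y X)
    (hginv : ∀ x ∈ U, IsUnit (g x).det)
    (T : Fin (4 * r) → Fin (4 * r) → Fin (4 * r) → (Fin (4 * r) → ℝ) → ℝ)
    (hTsmooth : ∀ X Y Z, ContDiffOn ℝ (⊤ : ℕ∞) (T X Y Z) U)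
    (hTanti : ∀ X Y Z, ∀ x ∈ U, T X Y Z x = - T Y X Z x)
    (J : Fin 3 → Fin (4 * r) → Fin (4 * r) → (Fin (4 * r) → ℝ) → ℝ)
    (hJ : IsAlmostHypercomplexOn J U)
    (hN : ∀ X Y Z, ∀ x ∈ U, nijenhuis J X Y Z x = 0)
    -- `J` is covariantly constant with respect to `Γ⁺ = γ + T`:
    (hJcov : ∀ α X Y Z, ∀ x ∈ U,
      pd X (J α Y Z) x
        - (∑ W, (christoffel g X Y W x + T X Y W x) * J α W Z x)
        + (∑ W, (christoffel g X W Z x + T X W Z x) * J α Y W x) = 0)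
    -- the torsion is covariantly constant with respect to `𝔇⁺`:
    (hTcov : ∀ X Y Z W, ∀ x ∈ U,
      pd X (T Y Z W) x
        - (∑ V, (christoffel g X Y V x + T X Y V x) * T V Z W x)
        - (∑ V, (christoffel g X Z V x + T X Z V x) * T Y V W x)
        + (∑ V, (christoffel g X V W x + T X V W x) * T Y Z V x) = 0)
    -- the torsion is traceless:
    (hTtrace : ∀ X, ∀ x ∈ U, ∑ Z, T X Z Z x = 0) :
    ∀ X Y, ∀ x ∈ U,
      (1 / 2) * (obataRicci J X Y x - obataRicci J Y X x)
        = (2 / 3) * ∑ Z, T X Y Z x *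
            (∑ α, ∑ W, ∑ V, ∑ u, J α Z W x * T W V u x * J α u V x) :=
  stmt_19_general r U hU g hgsmooth hgsym hginv T hTsmooth hTanti J hJ hJcov hTcov hTtrace
end
end
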